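/- arXiv:2601.00283 — 6 statements merged into one kernel-verified Lean document; each statement's English description precedes it below -/
import Mathlib

section
/- Let (F, τ) be an ordered Fréchet space whose positive cone F₊ is τ-closed and generating, and let (Y, ξ) be a real topological vector space. Then every collectively order-to-topology bounded family 𝒯 of linear operators from F to Y is collectively bounded; that is, if ⋃_{T∈𝒯} T[a,b] is ξ-bounded for all a, b ∈ F, then ⋃_{T∈𝒯} T(B) is ξ-bounded for every τ-bounded subset B of F. -/
open Filter Set Topology Bornology

universe u

/-- `x_α ↓ 0`: the net `x` is decreasing with infimum `0`. -/
def DecreasesToZero {X : Type*} [Zero X] [PartialOrder X] {ι : Type*} [Preorder ι]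
    (x : ι → X) : Prop :=
  Antitone x ∧ IsGLB (Set.range x) 0

/-- `x_α →o 0`: order convergence of the net `x` to `0`, i.e. there is a net `g_β`,
indexed by a (nonempty) directed set, decreasing with infimum `0`, such that for each `β`
there is `α_β` with `±x_α ≤ g_β` for all `α ≥ α_β`. -/
def OrderConvZero {X : Type u} [Zero X] [Neg X] [PartialOrder X] {ι : Type*} [Preorder ι]
    (x : ι → X) : Prop :=
  ∃ (β : Type u) (pβ : Preorder β), Nonempty β ∧
    IsDirected β (fun b₁ b₂ => pβ.le b₁ b₂) ∧
    ∃ g : β → X, (∀ b₁ b₂ : β, pβ.le b₁ b₂ → g b₂ ≤ g b₁) ∧ IsGLB (Set.range g) 0 ∧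
      ∀ b : β, ∃ a₀ : ι, ∀ a : ι, a₀ ≤ a → -g b ≤ x a ∧ x a ≤ g b

/-- `x_α →r 0`: relative uniform convergence of the net `x` to `0`: for some `u ≥ 0`
there is an increasing sequence `(α_n)` of indices with `±x_α ≤ (1/n)u` for all `α ≥ α_n`. -/
def RuConvZero {X : Type*} [Zero X] [Neg X] [PartialOrder X] [SMul ℝ X] {ι : Type*} [Preorder ι]
    (x : ι → X) : Prop :=
  ∃ u : X, 0 ≤ u ∧ ∃ α : ℕ → ι, Monotone α ∧
    ∀ n : ℕ, 0 < n → ∀ a : ι, α n ≤ a → -((n : ℝ)⁻¹ • u) ≤ x a ∧ x a ≤ (n : ℝ)⁻¹ • u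

/-- The positive cone of an ordered TVS is normal: the topology has a base of neighborhoods
of `0` consisting of full sets. -/
def NormalConeTVS (Y : Type*) [Zero Y] [PartialOrder Y] [TopologicalSpace Y] : Prop :=
  ∀ U ∈ nhds (0 : Y), ∃ V ∈ nhds (0 : Y), V ⊆ U ∧
    ∀ a b x : Y, a ∈ V → b ∈ V → a ≤ x → x ≤ b → x ∈ V

/-!
The cone is non-flat (Klee–Andô): since it is generating, Baire's theorem makes the closure of
`F₊ ∩ W - F₊ ∩ W` a neighbourhood of zero for every neighbourhood `W` of zero, and, as in the
proof of the open mapping theorem, completeness and closedness of the cone remove the closure.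
Hence a null sequence has a subsequence `z (φ k) = a k - b k` with `a k, b k ≥ 0` so small
that both series converge, and it lies in `[-u, u]` for `u = ∑ a k + ∑ b k`.
Given `y n = T n (x n)` with `x n ∈ B`, apply this to the null sequence `x n / (n + 1)`: along
the subsequence, `y / (n + 1)²` is `1 / (n + 1)` times an element of the bounded set
`⋃ T ∈ 𝒯, T '' [-u, u]`, so it tends to zero, which is enough for boundedness.
-/

open Pointwise

theorem exists_antitone_basis_closed_neg_eq_add_subset (G : Type*) [AddGroup G]
    [TopologicalSpace G] [IsTopologicalAddGroup G] [(𝓝 (0 : G)).IsCountablyGenerated] :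
    ∃ U : ℕ → Set G, (𝓝 0).HasAntitoneBasis U ∧
      ∀ n, IsClosed (U n) ∧ -U n = U n ∧ U (n + 1) + U (n + 1) ⊆ U n := by
  obtain ⟨W, hW⟩ := (𝓝 (0 : G)).exists_antitone_basis
  have step (n : ℕ) (V : Set G) (hV : V ∈ 𝓝 0) :
      ∃ V' ∈ 𝓝 (0 : G), IsClosed V' ∧ -V' = V' ∧ V' + V' ⊆ V ∩ W n :=
    exists_closed_nhds_zero_neg_eq_add_subset (inter_mem hV (hW.mem n))
  choose next next_mem next_closed next_neg next_sub using step
  let U : ℕ → {V : Set G // V ∈ 𝓝 0 ∧ IsClosed V ∧ -V = V} := fun n =>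
    Nat.rec ⟨univ, univ_mem, isClosed_univ, neg_univ⟩
      (fun n V => ⟨next n V V.2.1, next_mem n V V.2.1, next_closed n V V.2.1,
        next_neg n V V.2.1⟩) n
  have hsub (n : ℕ) : (U (n + 1)).1 + (U (n + 1)).1 ⊆ (U n).1 ∩ W n :=
    next_sub n _ (U n).2.1
  have hself (n : ℕ) : (U (n + 1)).1 ⊆ (U n).1 ∩ W n :=
    (subset_add_left _ (mem_of_mem_nhds (U (n + 1)).2.1)).trans (hsub n)
  refine ⟨fun n => (U n).1, ⟨?_, ?_⟩,
    fun n => ⟨(U n).2.2.1, (U n).2.2.2, (hsub n).trans inter_subset_left⟩⟩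
  · exact hW.toHasBasis.to_hasBasis
      (fun n _ => ⟨n + 1, trivial, (hself n).trans inter_subset_right⟩)
      (fun n _ => hW.toHasBasis.mem_iff.1 (U n).2.1)
  · exact antitone_nat_of_succ_le fun n => (hself n).trans inter_subset_left

theorem Finset.sum_mem_of_add_subset {G : Type*} [AddCommMonoid G] {U : ℕ → Set G}
    (h0 : ∀ n, (0 : G) ∈ U n) (hadd : ∀ n, U (n + 1) + U (n + 1) ⊆ U n) {f : ℕ → G}
    (hf : ∀ k, f k ∈ U (k + 1)) {n : ℕ} {t : Finset ℕ} (ht : ∀ k ∈ t, n ≤ k) :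
    ∑ k ∈ t, f k ∈ U n := by
  have hsucc (m : ℕ) : U (m + 1) ⊆ U m := (Set.subset_add_left _ (h0 (m + 1))).trans (hadd m)
  have hanti : Antitone U := antitone_nat_of_succ_le hsucc
  induction t using Finset.induction_on_min generalizing n with
  | empty => simpa using h0 n
  | insert a s has ih =>
    have hna : n ≤ a := ht a (Finset.mem_insert_self a s)
    rw [Finset.sum_insert fun ha => lt_irrefl a (has a ha)]
    have hfa : f a ∈ U (n + 1) := hanti (by omega : n + 1 ≤ a + 1) (hf a)
    have hs : ∑ k ∈ s, f k ∈ U (n + 1) :=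
      hanti (by omega : n + 1 ≤ a + 1) (ih fun k hk => has k hk)
    exact hadd n (Set.add_mem_add hfa hs)

theorem summable_of_mem_succ_of_add_subset {G : Type*} [AddCommGroup G] [UniformSpace G]
    [IsUniformAddGroup G] [CompleteSpace G] {U : ℕ → Set G} (hU : (𝓝 0).HasAntitoneBasis U)
    (hadd : ∀ n, U (n + 1) + U (n + 1) ⊆ U n) {f : ℕ → G} (hf : ∀ k, f k ∈ U (k + 1)) :
    Summable f := by
  refine summable_iff_vanishing.2 fun e he => ?_
  obtain ⟨n, hn⟩ := hU.mem_iff.1 he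
  refine ⟨Finset.range n, fun t ht => hn <|
    Finset.sum_mem_of_add_subset (fun m => mem_of_mem_nhds (hU.mem m)) hadd hf fun k hk => ?_⟩
  simpa using Finset.disjoint_left.1 ht hk

theorem exists_tendsto_sum_range_of_closure_subset_add {G : Type*} [AddCommGroup G]
    [TopologicalSpace G] [IsTopologicalAddGroup G] {S : ℕ → Set G}
    (hS : ∀ k, closure (S k) ⊆ S k + closure (S (k + 1)))
    (hlim : Tendsto (fun k => closure (S k)) atTop (𝓝 0).smallSets)
    {x : G} (hx : x ∈ closure (S 0)) :
    ∃ s : ℕ → G, (∀ k, s k ∈ S k) ∧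
      Tendsto (fun M => ∑ k ∈ Finset.range M, s k) atTop (𝓝 x) := by
  have step (k : ℕ) (y : closure (S k)) : ∃ s ∈ S k, (y : G) - s ∈ closure (S (k + 1)) := by
    obtain ⟨s, hs, r, hr, hsr⟩ := hS k y.2
    exact ⟨s, hs, by rwa [← hsr, add_sub_cancel_left]⟩
  choose next next_mem next_rem using step
  let r : (k : ℕ) → closure (S k) := fun k =>
    Nat.rec ⟨x, hx⟩ (fun k y => ⟨y - next k y, next_rem k y⟩) k
  refine ⟨fun k => next k (r k), fun k => next_mem k (r k), ?_⟩
  have hsum (M : ℕ) : ∑ k ∈ Finset.range M, next k (r k) = x - (r M).1 := by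
    induction M with
    | zero => simp [r]
    | succ M ih =>
      rw [Finset.sum_range_succ, ih]
      show _ = x - ((r M).1 - next M (r M))
      abel
  have hr : Tendsto (fun M => (r M).1) atTop (𝓝 0) :=
    hlim.of_smallSets (Eventually.of_forall fun M => (r M).2)
  simpa [hsum] using tendsto_const_nhds.sub hr

theorem OrderClosedTopology.of_isClosed_nonneg {F : Type*} [AddCommGroup F] [PartialOrder F]
    [IsOrderedAddMonoid F] [TopologicalSpace F] [IsTopologicalAddGroup F]
    (h : IsClosed {x : F | 0 ≤ x}) : OrderClosedTopology F where
  isClosed_le' := by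
    simpa only [preimage_ofPred_eq, Pi.sub_apply, sub_nonneg] using
      h.preimage (continuous_snd.sub continuous_fst)

section ConeDecomposition

variable {F : Type*} [AddCommGroup F] [PartialOrder F] [IsOrderedAddMonoid F]

theorem closure_nonneg_inter_sub_mem_nhds_zero [Module ℝ F] [PosSMulMono ℝ F]
    [TopologicalSpace F] [IsTopologicalAddGroup F] [ContinuousSMul ℝ F] [BaireSpace F]
    (hgen : ∀ x : F, ∃ a b : F, 0 ≤ a ∧ 0 ≤ b ∧ x = a - b) {W : Set F} (hW : W ∈ 𝓝 0) :
    closure (Ici 0 ∩ W - Ici 0 ∩ W) ∈ 𝓝 0 := by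
  obtain ⟨V, hV, -, -, hVW⟩ := exists_closed_nhds_zero_neg_eq_add_subset hW
  set D := Ici (0 : F) ∩ V - Ici 0 ∩ V
  have hcover : ⋃ m : ℕ, closure (((m : ℝ) + 1) • D) = univ := by
    refine eq_univ_of_forall fun x => ?_
    obtain ⟨a, b, ha, hb, rfl⟩ := hgen x
    obtain ⟨m, hm⟩ :=
      ((tendsto_natCast_atTop_cobounded.comp (tendsto_add_atTop_nat 1)).eventually
        ((absorbent_nhds_zero (𝕜 := ℝ) hV).absorbs_finite (toFinite {a, b}))).exists
    have hm0 : ((m : ℝ) + 1) ≠ 0 := by positivity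
    have hpos (y : F) (hy : 0 ≤ y) (hyV : y ∈ ((m : ℝ) + 1) • V) :
        ((m : ℝ) + 1)⁻¹ • y ∈ Ici 0 ∩ V := by
      obtain ⟨v, hv, rfl⟩ := hyV
      have hinv : (0 : ℝ) ≤ ((m : ℝ) + 1)⁻¹ := by positivity
      exact ⟨by simpa [inv_smul_smul₀ hm0] using smul_nonneg hinv hy,
        by simpa [inv_smul_smul₀ hm0] using hv⟩
    simp only [Function.comp_apply, Nat.cast_add, Nat.cast_one, insert_subset_iff,
      singleton_subset_iff] at hm
    refine mem_iUnion.2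
      ⟨m, subset_closure ⟨_, sub_mem_sub (hpos a ha hm.1) (hpos b hb hm.2), ?_⟩⟩
    simp [smul_sub, smul_inv_smul₀ hm0]
  obtain ⟨m, hm⟩ := nonempty_interior_of_iUnion_of_closed (fun _ => isClosed_closure) hcover
  have hm0 : ((m : ℝ) + 1) ≠ 0 := by positivity
  obtain ⟨y, hy⟩ : (interior (closure D)).Nonempty := by
    rwa [closure_smul₀' hm0, interior_smul₀ hm0, smul_set_nonempty] at hm
  have hsub : interior (closure D) - closure D ⊆ closure (Ici 0 ∩ W - Ici 0 ∩ W) := by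
    rintro _ ⟨p, hp, q, hq, rfl⟩
    refine map_mem_closure₂ continuous_sub (interior_subset hp) hq ?_
    rintro _ ⟨a, ha, b, hb, rfl⟩ _ ⟨c, hc, d, hd, rfl⟩
    refine ⟨a + d, ⟨add_nonneg ha.1 hd.1, hVW (add_mem_add ha.2 hd.2)⟩,
      b + c, ⟨add_nonneg hb.1 hc.1, hVW (add_mem_add hb.2 hc.2)⟩, by
        show a + d - (b + c) = a - b - (c - d); abel⟩
  exact mem_of_superset (isOpen_interior.sub_right.mem_nhds
    ⟨y, hy, y, interior_subset hy, sub_self y⟩) hsub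

theorem closure_nonneg_inter_sub_subset [UniformSpace F] [IsUniformAddGroup F] [CompleteSpace F]
    [OrderClosedTopology F] {U : ℕ → Set F} (hU : (𝓝 0).HasAntitoneBasis U)
    (hUc : ∀ n, IsClosed (U n)) (hUneg : ∀ n, -U n = U n)
    (hUadd : ∀ n, U (n + 1) + U (n + 1) ⊆ U n)
    (hD : ∀ n, closure (Ici 0 ∩ U n - Ici 0 ∩ U n) ∈ 𝓝 0) (n : ℕ) :
    closure (Ici 0 ∩ U (n + 1) - Ici 0 ∩ U (n + 1)) ⊆ Ici 0 ∩ U n - Ici 0 ∩ U n := by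
  set D : ℕ → Set F := fun m => Ici 0 ∩ U m - Ici 0 ∩ U m
  have hDneg (m : ℕ) (y : F) (hy : y ∈ closure (D m)) : -y ∈ closure (D m) := by
    rwa [← Set.neg_mem_neg, neg_closure, neg_sub, neg_neg]
  have hDU (m : ℕ) : closure (D (m + 1)) ⊆ U m := by
    refine closure_minimal ?_ (hUc m)
    calc D (m + 1) ⊆ U (m + 1) - U (m + 1) :=
          sub_subset_sub inter_subset_right inter_subset_right
      _ = U (m + 1) + U (m + 1) := by rw [sub_eq_add_neg, hUneg]
      _ ⊆ U m := hUadd m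
  intro x hx
  obtain ⟨s, hsD, hs⟩ :=
    exists_tendsto_sum_range_of_closure_subset_add (S := fun k => D (n + k + 1))
    (fun k => closure_subset_add_right_of_mem_nhds_zero_of_neg _ (hD _) (hDneg _))
    ((hU.tendsto_smallSets.comp (tendsto_add_atTop_nat n)).smallSets_mono
      (Eventually.of_forall fun k => by simpa [add_comm] using hDU (n + k))) hx
  choose a ha b hb hab using hsD
  set K := Ici (0 : F) ∩ U n
  have hK : IsClosed K := isClosed_Ici.inter (hUc n)
  have hpartial (c : ℕ → F) (hc : ∀ k, c k ∈ Ici 0 ∩ U (n + k + 1)) (M : ℕ) :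
      ∑ k ∈ Finset.range M, c k ∈ K :=
    ⟨Finset.sum_nonneg fun k _ => (hc k).1,
      Finset.sum_mem_of_add_subset (U := fun m => U (n + m)) (fun m => mem_of_mem_nhds (hU.mem _))
        (fun m => hUadd _) (fun k => (hc k).2) fun k _ => Nat.zero_le k⟩
  have hA := (summable_of_mem_succ_of_add_subset hU hUadd
    fun k => hU.antitone (by omega) (ha k).2).hasSum.tendsto_sum_nat
  -- `∑ b` is read off from the expansion `x = ∑ (a - b)` instead of being a second limit
  have hB : Tendsto (fun M => ∑ k ∈ Finset.range M, b k) atTop (𝓝 (∑' k, a k - x)) := by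
    refine (hA.sub hs).congr fun M => ?_
    simp only [← hab, Finset.sum_sub_distrib, sub_sub_cancel]
  refine ⟨∑' k, a k, hK.mem_of_tendsto hA (Eventually.of_forall (hpartial a ha)),
    ∑' k, a k - x, hK.mem_of_tendsto hB (Eventually.of_forall (hpartial b hb)),
    sub_sub_cancel _ _⟩

variable [Module ℝ F] [PosSMulMono ℝ F] [UniformSpace F] [IsUniformAddGroup F]
  [ContinuousSMul ℝ F] [FirstCountableTopology F] [CompleteSpace F] [OrderClosedTopology F]

theorem nonneg_inter_sub_mem_nhds_zero (hgen : ∀ x : F, ∃ a b : F, 0 ≤ a ∧ 0 ≤ b ∧ x = a - b)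
    {W : Set F} (hW : W ∈ 𝓝 0) : Ici 0 ∩ W - Ici 0 ∩ W ∈ 𝓝 0 := by
  have : (uniformity F).IsCountablyGenerated := IsUniformAddGroup.uniformity_countably_generated
  obtain ⟨U, hU, hU'⟩ := exists_antitone_basis_closed_neg_eq_add_subset F
  choose hUc hUneg hUadd using hU'
  obtain ⟨n, hn⟩ := hU.mem_iff.1 hW
  refine mem_of_superset (closure_nonneg_inter_sub_mem_nhds_zero hgen (hU.mem (n + 1))) ?_
  refine (closure_nonneg_inter_sub_subset hU hUc hUneg hUadd
    (fun m => closure_nonneg_inter_sub_mem_nhds_zero hgen (hU.mem m)) n).trans ?_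
  exact sub_subset_sub (inter_subset_inter_right _ hn) (inter_subset_inter_right _ hn)

theorem exists_subseq_mem_Icc_of_tendsto_zero
    (hgen : ∀ x : F, ∃ a b : F, 0 ≤ a ∧ 0 ≤ b ∧ x = a - b) {z : ℕ → F}
    (hz : Tendsto z atTop (𝓝 0)) :
    ∃ u : F, ∃ φ : ℕ → ℕ, StrictMono φ ∧ ∀ k, z (φ k) ∈ Icc (-u) u := by
  obtain ⟨U, hU, hU'⟩ := exists_antitone_basis_closed_neg_eq_add_subset F
  have hUadd (n : ℕ) := (hU' n).2.2
  obtain ⟨φ, hφ, hzφ⟩ := Tendsto.subseq_mem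
    (fun k => nonneg_inter_sub_mem_nhds_zero hgen (hU.mem (k + 1))) hz
  choose a ha b hb hab using hzφ
  have hsa := summable_of_mem_succ_of_add_subset hU hUadd fun k => (ha k).2
  have hsb := summable_of_mem_succ_of_add_subset hU hUadd fun k => (hb k).2
  refine ⟨∑' k, a k + ∑' k, b k, φ, hφ, fun k => ?_⟩
  rw [← hab]
  constructor
  · calc -(∑' k, a k + ∑' k, b k) ≤ -b k := neg_le_neg <| le_add_of_nonneg_of_le
          (tsum_nonneg fun i => (ha i).1) (hsb.le_tsum k fun i _ => (hb i).1)
      _ ≤ a k - b k := by simpa [sub_eq_neg_add] using (ha k).1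
  · calc a k - b k ≤ a k := sub_le_self _ (hb k).1
      _ ≤ ∑' k, a k + ∑' k, b k := le_add_of_le_of_nonneg
          (hsa.le_tsum k fun i _ => (ha i).1) (tsum_nonneg fun i => (hb i).1)

end ConeDecomposition

theorem isVonNBounded_of_forall_mapClusterPt_smul {𝕜 E : Type*} [NontriviallyNormedField 𝕜]
    [AddCommGroup E] [Module 𝕜 E] [TopologicalSpace E] [ContinuousSMul 𝕜 E] {ε : ℕ → 𝕜}
    (hε : ∀ n, ε n ≠ 0) {S : Set E}
    (H : ∀ x : ℕ → E, (∀ n, x n ∈ S) → MapClusterPt 0 atTop (ε • x)) : IsVonNBounded 𝕜 S := by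
  rw [(nhds_basis_balanced 𝕜 E).isVonNBounded_iff]
  by_contra! ⟨V, ⟨hV, hVb⟩, hVS⟩
  have hx (n : ℕ) : ∃ x ∈ S, ε n • x ∉ V := by
    rw [absorbs_iff_norm] at hVS
    push Not at hVS
    obtain ⟨c, hcε, hcS⟩ := hVS ‖(ε n)⁻¹‖
    obtain ⟨x, hxS, hx⟩ := not_subset.1 hcS
    exact ⟨x, hxS, fun hxV =>
      hx (hVb.smul_mono hcε ((mem_inv_smul_set_iff₀ (hε n) _ _).2 hxV))⟩
  choose x hxS hxV using hx
  obtain ⟨n, hn⟩ := ((H x hxS).frequently (eventually_mem_set.2 hV)).exists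
  exact hxV n hn

theorem collectively_orderToTopologyBounded_implies_collectivelyBounded_general
    {F : Type*} [AddCommGroup F] [Module ℝ F] [PartialOrder F]
    [CovariantClass F F (· + ·) (· ≤ ·)] [PosSMulMono ℝ F]
    [UniformSpace F] [IsUniformAddGroup F] [ContinuousSMul ℝ F]
    [FirstCountableTopology F] [CompleteSpace F]
    {Y : Type*} [AddCommGroup Y] [Module ℝ Y] [TopologicalSpace Y]
    [ContinuousSMul ℝ Y]
    (hclosed : IsClosed {x : F | 0 ≤ x})
    (hgen : ∀ x : F, ∃ a b : F, 0 ≤ a ∧ 0 ≤ b ∧ x = a - b)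
    (𝒯 : Set (F →ₗ[ℝ] Y))
    (hob : ∀ a b : F, IsVonNBounded ℝ (⋃ T ∈ 𝒯, T '' Set.Icc a b)) :
    ∀ B : Set F, IsVonNBounded ℝ B → IsVonNBounded ℝ (⋃ T ∈ 𝒯, T '' B) := by
  have : IsOrderedAddMonoid F := { add_le_add_left := fun _ _ h c => add_le_add_left h c }
  have : OrderClosedTopology F := .of_isClosed_nonneg hclosed
  intro B hB
  set δ : ℕ → ℝ := fun n => 1 / ((n : ℝ) + 1)
  have hδ : Tendsto δ atTop (𝓝 0) := tendsto_one_div_add_atTop_nhds_zero_nat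
  refine isVonNBounded_of_forall_mapClusterPt_smul (ε := fun n => δ n ^ 2)
    (fun n => pow_ne_zero 2 (one_div_ne_zero (Nat.cast_add_one_ne_zero n)))
    fun y hy => ?_
  choose T hT x hx hTx using fun n => (by simpa using hy n : ∃ T ∈ 𝒯, ∃ b ∈ B, T b = y n)
  obtain ⟨u, φ, hφ, hu⟩ := exists_subseq_mem_Icc_of_tendsto_zero hgen
    (hB.smul_tendsto_zero (Eventually.of_forall hx) hδ)
  refine .of_comp hφ.tendsto_atTop (Tendsto.mapClusterPt ?_)
  convert (hob (-u) u).smul_tendsto_zero (x := fun k => T (φ k) ((δ • x) (φ k)))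
    (Eventually.of_forall fun k => mem_biUnion (hT (φ k)) (mem_image_of_mem _ (hu k)))
    (hδ.comp hφ.tendsto_atTop) using 1
  funext k
  simp [← hTx, smul_smul, sq]

/-- every collectively order-to-topology bounded family of linear operators
from an ordered Fréchet space with a closed generating cone to a TVS is collectively bounded. -/
theorem collectively_orderToTopologyBounded_implies_collectivelyBounded
    {F : Type*} [AddCommGroup F] [Module ℝ F] [PartialOrder F]
    [CovariantClass F F (· + ·) (· ≤ ·)] [PosSMulMono ℝ F]
    [UniformSpace F] [IsUniformAddGroup F] [ContinuousSMul ℝ F] [LocallyConvexSpace ℝ F]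
    [FirstCountableTopology F] [T2Space F] [CompleteSpace F]
    {Y : Type*} [AddCommGroup Y] [Module ℝ Y] [TopologicalSpace Y]
    [IsTopologicalAddGroup Y] [ContinuousSMul ℝ Y]
    (hclosed : IsClosed {x : F | 0 ≤ x})
    (hgen : ∀ x : F, ∃ a b : F, 0 ≤ a ∧ 0 ≤ b ∧ x = a - b)
    (𝒯 : Set (F →ₗ[ℝ] Y))
    (hob : ∀ a b : F, IsVonNBounded ℝ (⋃ T ∈ 𝒯, T '' Set.Icc a b)) :
    ∀ B : Set F, IsVonNBounded ℝ B → IsVonNBounded ℝ (⋃ T ∈ 𝒯, T '' B) :=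
  collectively_orderToTopologyBounded_implies_collectivelyBounded_general hclosed hgen 𝒯 hob
end

section
/- Every order-to-topology bounded linear operator from an ordered Fréchet space with a closed generating cone to a topological vector space is topologically bounded. That is, if (F, τ) is an ordered Fréchet space whose positive cone F₊ is τ-closed and generating, (Y, ξ) is a real TVS, and T : F → Y is linear with T[a,b] ξ-bounded for all a, b ∈ F, then T maps τ-bounded sets to ξ-bounded sets. -/
open Filter Set Topology Bornology

universe u

/-!
Write `F₊` for the positive cone. Because `F₊` is generating, `(F₊ ∩ V) - (F₊ ∩ V)` is absorbing
for every neighbourhood `V` of `0`, so by Baire's theorem its closure is a neighbourhood of `0`.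
The successive approximation argument of the open mapping theorem, with completeness and the
closedness of `F₊` to control the limits, removes the closure. Consequently a sequence `zₖ`
tending to `0` fast enough splits as `zₖ = aₖ - bₖ` with `aₖ, bₖ ∈ F₊` summable, and then lies
in the order interval `[-u, u]` for `u = ∑ (aₖ + bₖ)`. An operator bounded on order intervals is
therefore bounded on all such sequences, which forces continuity at `0`, hence boundedness.
-/

open Pointwise

structure IsHalvingBasis {F : Type*} [AddCommGroup F] [TopologicalSpace F] (U : ℕ → Set F) :
    Prop where
  hasBasis : (𝓝 (0 : F)).HasBasis (fun _ => True) U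
  isClosed : ∀ n, IsClosed (U n)
  add_mem : ∀ n, ∀ x ∈ U (n + 1), ∀ y ∈ U (n + 1), x + y ∈ U n

theorem exists_isHalvingBasis (F : Type*) [AddCommGroup F] [TopologicalSpace F]
    [IsTopologicalAddGroup F] [FirstCountableTopology F] : ∃ U : ℕ → Set F, IsHalvingBasis U := by
  obtain ⟨b, hb⟩ := (𝓝 (0 : F)).exists_antitone_basis
  have step : ∀ n, ∀ V ∈ 𝓝 (0 : F), ∃ W ∈ 𝓝 (0 : F),
      IsClosed W ∧ W ⊆ b n ∧ ∀ x ∈ W, ∀ y ∈ W, x + y ∈ V := by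
    intro n V hV
    obtain ⟨H, hH, hHV⟩ := exists_nhds_zero_half hV
    obtain ⟨W, hW, hWc, hWH⟩ := exists_mem_nhds_isClosed_subset (inter_mem hH (hb.mem n))
    exact ⟨W, hW, hWc, fun x hx => (hWH hx).2, fun x hx y hy => hHV x (hWH hx).1 y (hWH hy).1⟩
  choose W hW hWc hWb hWadd using step
  let U : ℕ → {V : Set F // V ∈ 𝓝 (0 : F)} := fun n =>
    Nat.rec ⟨W 0 univ univ_mem, hW 0 univ univ_mem⟩ (fun n V => ⟨W (n + 1) V V.2, hW _ _ V.2⟩) n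
  have hUb : ∀ n, (U n).1 ⊆ b n := by
    rintro (_ | n)
    exacts [hWb _ _ _, hWb _ _ _]
  refine ⟨fun n => (U n).1, ?_, ?_, fun n => hWadd (n + 1) _ (U n).2⟩
  · exact hb.toHasBasis.to_hasBasis' (fun n _ => ⟨n, trivial, hUb n⟩) fun n _ => (U n).2
  · rintro (_ | n)
    exacts [hWc _ _ _, hWc _ _ _]

namespace IsHalvingBasis

variable {F : Type*} [AddCommGroup F]

section Topological

variable [TopologicalSpace F] {U : ℕ → Set F}

theorem mem_nhds (hU : IsHalvingBasis U) (n : ℕ) : U n ∈ 𝓝 (0 : F) :=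
  hU.hasBasis.mem_of_mem trivial

theorem antitone (hU : IsHalvingBasis U) : Antitone U :=
  antitone_nat_of_succ_le fun n x hx => by
    simpa using hU.add_mem n x hx 0 (mem_of_mem_nhds (hU.mem_nhds _))

theorem sum_mem (hU : IsHalvingBasis U) {e : ℕ → F} {k j : ℕ} (t : Finset ℕ)
    (ht : ∀ i ∈ t, j ≤ i) (he : ∀ i ∈ t, e i ∈ U (k + i + 1)) : ∑ i ∈ t, e i ∈ U (k + j) := by
  classical
  induction t using Finset.induction_on_min generalizing j with
  | empty => simpa using mem_of_mem_nhds (hU.mem_nhds _)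
  | insert a s has ih =>
    have ha := ht a (Finset.mem_insert_self a s)
    rw [Finset.sum_insert fun h => lt_irrefl a (has a h)]
    have hs : ∑ i ∈ s, e i ∈ U (k + (a + 1)) :=
      ih (fun i hi => has i hi) fun i hi => he i (Finset.mem_insert_of_mem hi)
    exact hU.antitone (by omega) (hU.add_mem _ _ (he a (Finset.mem_insert_self a s)) _ hs)

theorem tendsto_zero (hU : IsHalvingBasis U) {f : ℕ → F} (hf : ∀ n, f n ∈ U n) :
    Tendsto f atTop (𝓝 0) :=
  hU.hasBasis.tendsto_right_iff.2 fun i _ =>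
    eventually_atTop.2 ⟨i, fun n hn => hU.antitone hn (hf n)⟩

end Topological

variable [UniformSpace F] [IsUniformAddGroup F] [CompleteSpace F] {U : ℕ → Set F}
  {e : ℕ → F} {k : ℕ}

theorem summable (hU : IsHalvingBasis U) (he : ∀ i, e i ∈ U (k + i + 1)) : Summable e := by
  refine summable_iff_vanishing.2 fun V hV => ?_
  obtain ⟨n, -, hn⟩ := hU.hasBasis.mem_iff.1 hV
  refine ⟨Finset.range n, fun t ht => hn (hU.antitone (Nat.le_add_left n k) ?_)⟩
  exact hU.sum_mem t (fun i hi => by simpa using Finset.disjoint_left.1 ht hi) fun i _ => he i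

theorem tsum_mem (hU : IsHalvingBasis U) (he : ∀ i, e i ∈ U (k + i + 1)) : ∑' i, e i ∈ U k :=
  (hU.isClosed k).mem_of_tendsto (hU.summable he).hasSum.tendsto_sum_nat <|
    Eventually.of_forall fun n => hU.sum_mem (Finset.range n) (fun _ _ => Nat.zero_le _)
      fun i _ => he i

end IsHalvingBasis

theorem LinearMap.continuous_of_isVonNBounded_image_range {𝕜 E G : Type*}
    [NontriviallyNormedField 𝕜] [AddCommGroup E] [Module 𝕜 E] [TopologicalSpace E]
    [IsTopologicalAddGroup E] [ContinuousConstSMul 𝕜 E] [AddCommGroup G] [Module 𝕜 G]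
    [TopologicalSpace G] [ContinuousAdd G] (T : E →ₗ[𝕜] G) {W : ℕ → Set E}
    (hW : ∀ k, W k ∈ 𝓝 0)
    (hT : ∀ z : ℕ → E, (∀ k, z k ∈ W k) → IsVonNBounded 𝕜 (T '' Set.range z)) : Continuous T := by
  obtain ⟨c, hc0, hc1⟩ := NormedField.exists_norm_lt_one 𝕜
  refine continuous_of_continuousAt_zero T fun V hV => ?_
  rw [map_zero] at hV
  by_contra hTV
  have hbad : ∀ k, ∃ z ∈ W k, T (c ^ k • z) ∉ V := by
    intro k
    have hsmul : c ^ k • W k ∈ 𝓝 (0 : E) :=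
      (set_smul_mem_nhds_zero_iff (pow_ne_zero k (norm_pos_iff.1 hc0))).2 (hW k)
    obtain ⟨_, ⟨z, hz, rfl⟩, hzV⟩ :=
      not_subset.1 fun h => hTV (mem_map.2 (mem_of_superset hsmul h))
    exact ⟨z, hz, hzV⟩
  choose z hzW hzV using hbad
  have hlim : Tendsto (fun k => T (c ^ k • z k)) atTop (𝓝 0) := by
    simp only [map_smul]
    exact (hT z hzW).smul_tendsto_zero
      (Eventually.of_forall fun k => mem_image_of_mem T (Set.mem_range_self k))
      (tendsto_pow_atTop_nhds_zero_of_norm_lt_one hc1)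
  obtain ⟨k, hk⟩ := (hlim.eventually (eventually_mem_set.2 hV)).exists
  exact hzV k hk

theorem exists_seq_sub_sum_mem_of_mem_closure {F : Type*} [AddCommGroup F] [TopologicalSpace F]
    [IsTopologicalAddGroup F] {A N : ℕ → Set F} (hN : ∀ i, N i ∈ 𝓝 0)
    (hNA : ∀ i, N i ⊆ closure (A (i + 1))) {x : F} (hx : x ∈ closure (A 0)) :
    ∃ s : ℕ → F, (∀ i, s i ∈ A i) ∧ ∀ n, x - ∑ i ∈ Finset.range (n + 1), s i ∈ N n := by
  have step : ∀ i, ∀ p ∈ closure (A i), ∃ s ∈ A i, p - s ∈ N i := fun i p hp => by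
    obtain ⟨s, hs, hsp⟩ := mem_closure_iff_nhds_zero.1 hp _ (neg_mem_nhds_zero F (hN i))
    exact ⟨s, hs, by simpa using hsp⟩
  choose σ hσA hσN using step
  let r : (i : ℕ) → {p // p ∈ closure (A i)} := fun i =>
    Nat.rec ⟨x, hx⟩ (fun i p => ⟨p.1 - σ i p.1 p.2, hNA i (hσN i p.1 p.2)⟩) i
  have hr : ∀ n, x - ∑ i ∈ Finset.range n, σ i (r i).1 (r i).2 = (r n).1 := by
    intro n
    induction n with
    | zero => simp [r]
    | succ n ih => rw [Finset.sum_range_succ, ← sub_sub, ih]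
  exact ⟨fun i => σ i (r i).1 (r i).2, fun i => hσA _ _ _, fun n => hr (n + 1) ▸ hσN _ _ _⟩

section OrderedCone

variable {F : Type*} [AddCommGroup F] [PartialOrder F]

theorem nonneg_inter_sub_sub_subset [IsOrderedAddMonoid F] {V W : Set F}
    (hWV : ∀ x ∈ W, ∀ y ∈ W, x + y ∈ V) :
    ((Ici 0 ∩ W) - (Ici 0 ∩ W)) - ((Ici 0 ∩ W) - (Ici 0 ∩ W)) ⊆ (Ici 0 ∩ V) - (Ici 0 ∩ V) := by
  rintro _ ⟨_, ⟨a, ha, b, hb, rfl⟩, _, ⟨c, hc, d, hd, rfl⟩, rfl⟩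
  refine ⟨a + d, ⟨add_nonneg ha.1 hd.1, hWV a ha.2 d hd.2⟩,
    b + c, ⟨add_nonneg hb.1 hc.1, hWV b hb.2 c hc.2⟩, by beta_reduce; abel⟩

variable [Module ℝ F] [PosSMulMono ℝ F]

theorem exists_inv_smul_mem_nonneg_inter_sub [TopologicalSpace F] [ContinuousSMul ℝ F]
    (hgen : ∀ x : F, ∃ a b : F, 0 ≤ a ∧ 0 ≤ b ∧ x = a - b) {V : Set F} (hV : V ∈ 𝓝 0) (x : F) :
    ∃ k : ℕ, ((k : ℝ) + 1)⁻¹ • x ∈ (Ici 0 ∩ V) - (Ici 0 ∩ V) := by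
  obtain ⟨a, b, ha, hb, rfl⟩ := hgen x
  have hsmall : ∀ y : F, ∀ᶠ k : ℕ in atTop, ((k : ℝ) + 1)⁻¹ • y ∈ V := fun y => by
    have := (tendsto_one_div_add_atTop_nhds_zero_nat.smul_const y).eventually_mem
      (by rwa [zero_smul ℝ y])
    simpa only [one_div] using this
  obtain ⟨k, hka, hkb⟩ := ((hsmall a).and (hsmall b)).exists
  have hk : (0 : ℝ) ≤ ((k : ℝ) + 1)⁻¹ := by positivity
  exact ⟨k, _, ⟨smul_nonneg hk ha, hka⟩, _, ⟨smul_nonneg hk hb, hkb⟩, (smul_sub _ a b).symm⟩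

theorem closure_nonneg_inter_sub_mem_nhds [IsOrderedAddMonoid F] [TopologicalSpace F]
    [IsTopologicalAddGroup F] [ContinuousSMul ℝ F] [BaireSpace F]
    (hgen : ∀ x : F, ∃ a b : F, 0 ≤ a ∧ 0 ≤ b ∧ x = a - b) {V : Set F} (hV : V ∈ 𝓝 0) : closure ((Ici 0 ∩ V) - (Ici 0 ∩ V)) ∈ 𝓝 0 := by
  obtain ⟨W, hW, hWV⟩ := exists_nhds_zero_half hV
  set D := (Ici 0 ∩ W) - (Ici 0 ∩ W)
  have hk : ∀ k : ℕ, (k : ℝ) + 1 ≠ 0 := fun k => by positivity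
  have hcover : ⋃ k : ℕ, ((k : ℝ) + 1) • closure D = univ :=
    eq_univ_of_forall fun x => mem_iUnion.2 <|
      (exists_inv_smul_mem_nonneg_inter_sub hgen hW x).imp fun k hx =>
        (mem_smul_set_iff_inv_smul_mem₀ (hk k) _ _).2 (subset_closure hx)
  obtain ⟨k, hint⟩ := nonempty_interior_of_iUnion_of_closed
    (fun k => isClosed_closure.smul_of_ne_zero (hk k)) hcover
  rw [interior_smul₀ (hk k)] at hint
  obtain ⟨_, ⟨y, hy, rfl⟩⟩ := hint
  have hnhds : {z | y + z ∈ interior (closure D)} ∈ 𝓝 (0 : F) :=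
    (isOpen_interior.preimage (continuous_const_add y)).mem_nhds (by simpa using hy)
  refine mem_of_superset hnhds fun z hz => ?_
  have hzy : (y + z) - y ∈ closure (D - D) :=
    map_mem_closure₂ continuous_sub (interior_subset hz) (interior_subset hy)
      fun p hp q hq => sub_mem_sub hp hq
  rw [add_sub_cancel_left] at hzy
  exact closure_mono (nonneg_inter_sub_sub_subset hWV) hzy

end OrderedCone

section FrechetCone

variable {F : Type*} [AddCommGroup F] [PartialOrder F] [IsOrderedAddMonoid F]
  [UniformSpace F] [IsUniformAddGroup F] [CompleteSpace F] [T2Space F] [OrderClosedTopology F]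

theorem IsHalvingBasis.closure_nonneg_inter_sub_subset {U : ℕ → Set F} (hU : IsHalvingBasis U)
    (hcl : ∀ n, closure ((Ici 0 ∩ U n) - (Ici 0 ∩ U n)) ∈ 𝓝 0) (j : ℕ) :
    closure ((Ici 0 ∩ U (j + 1)) - (Ici 0 ∩ U (j + 1))) ⊆ (Ici 0 ∩ U j) - (Ici 0 ∩ U j) := by
  intro x hx
  obtain ⟨s, hs, hres⟩ := exists_seq_sub_sum_mem_of_mem_closure
    (A := fun i => (Ici 0 ∩ U (j + i + 1)) - (Ici 0 ∩ U (j + i + 1)))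
    (N := fun i => closure ((Ici 0 ∩ U (j + i + 2)) - (Ici 0 ∩ U (j + i + 2))) ∩ U (j + i + 2))
    (fun i => inter_mem (hcl _) (hU.mem_nhds _)) (fun i => inter_subset_left) hx
  choose a ha b hb hab using hs
  have hlim : Tendsto (fun n => ∑ i ∈ Finset.range n, (a i - b i)) atTop (𝓝 x) := by
    rw [← tendsto_add_atTop_iff_nat 1]
    have hres0 : Tendsto (fun n => x - ∑ i ∈ Finset.range (n + 1), s i) atTop (𝓝 0) :=
      hU.tendsto_zero fun n => hU.antitone (by omega) (hres n).2
    simpa [hab] using (tendsto_const_nhds (x := x)).sub hres0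
  have hsa := hU.summable fun i => (ha i).2
  have hsb := hU.summable fun i => (hb i).2
  refine ⟨∑' i, a i, ⟨tsum_nonneg fun i => (ha i).1, hU.tsum_mem fun i => (ha i).2⟩,
    ∑' i, b i, ⟨tsum_nonneg fun i => (hb i).1, hU.tsum_mem fun i => (hb i).2⟩, ?_⟩
  exact tendsto_nhds_unique (hsa.hasSum.sub hsb.hasSum).tendsto_sum_nat hlim

variable [Module ℝ F] [PosSMulMono ℝ F] [ContinuousSMul ℝ F] [FirstCountableTopology F]

theorem nonneg_inter_sub_mem_nhds (hgen : ∀ x : F, ∃ a b : F, 0 ≤ a ∧ 0 ≤ b ∧ x = a - b)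
    {V : Set F} (hV : V ∈ 𝓝 0) : (Ici 0 ∩ V) - (Ici 0 ∩ V) ∈ 𝓝 0 := by
  have := IsUniformAddGroup.uniformity_countably_generated (α := F)
  obtain ⟨U, hU⟩ := exists_isHalvingBasis F
  obtain ⟨j, -, hjV⟩ := hU.hasBasis.mem_iff.1 hV
  have hcl := fun n => closure_nonneg_inter_sub_mem_nhds hgen (hU.mem_nhds n)
  refine mem_of_superset (hcl (j + 1)) ((hU.closure_nonneg_inter_sub_subset hcl j).trans ?_)
  exact sub_subset_sub (inter_subset_inter_right _ hjV) (inter_subset_inter_right _ hjV)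

theorem exists_nhds_seq_forall_range_subset_Icc
    (hgen : ∀ x : F, ∃ a b : F, 0 ≤ a ∧ 0 ≤ b ∧ x = a - b) :
    ∃ W : ℕ → Set F, (∀ k, W k ∈ 𝓝 0) ∧
      ∀ z : ℕ → F, (∀ k, z k ∈ W k) → ∃ u, range z ⊆ Icc (-u) u := by
  obtain ⟨U, hU⟩ := exists_isHalvingBasis F
  refine ⟨fun k => (Ici 0 ∩ U (k + 1)) - (Ici 0 ∩ U (k + 1)),
    fun k => nonneg_inter_sub_mem_nhds hgen (hU.mem_nhds _), fun z hz => ?_⟩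
  choose a ha b hb hab using hz
  have hsa : Summable a := hU.summable (k := 0) fun i => by simpa using (ha i).2
  have hsb : Summable b := hU.summable (k := 0) fun i => by simpa using (hb i).2
  have hA : 0 ≤ ∑' i, a i := tsum_nonneg fun i => (ha i).1
  have hB : 0 ≤ ∑' i, b i := tsum_nonneg fun i => (hb i).1
  refine ⟨∑' i, a i + ∑' i, b i, ?_⟩
  rintro _ ⟨k, rfl⟩
  rw [← hab k]
  constructor
  · rw [neg_add']
    exact sub_le_sub ((neg_nonpos.2 hA).trans (ha k).1) (hsb.le_tsum k fun i _ => (hb i).1)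
  · exact (sub_le_self _ (hb k).1).trans
      ((hsa.le_tsum k fun i _ => (ha i).1).trans (le_add_of_nonneg_right hB))

end FrechetCone

theorem orderToTopologyBounded_implies_bounded_general
    {F : Type*} [AddCommGroup F] [Module ℝ F] [PartialOrder F]
    [CovariantClass F F (· + ·) (· ≤ ·)] [PosSMulMono ℝ F]
    [UniformSpace F] [IsUniformAddGroup F] [ContinuousSMul ℝ F]
    [FirstCountableTopology F] [T2Space F] [CompleteSpace F]
    {Y : Type*} [AddCommGroup Y] [Module ℝ Y] [TopologicalSpace Y]
    [IsTopologicalAddGroup Y]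
    (hclosed : IsClosed {x : F | 0 ≤ x})
    (hgen : ∀ x : F, ∃ a b : F, 0 ≤ a ∧ 0 ≤ b ∧ x = a - b)
    (T : F →ₗ[ℝ] Y)
    (hob : ∀ a b : F, IsVonNBounded ℝ (T '' Set.Icc a b)) :
    ∀ B : Set F, IsVonNBounded ℝ B → IsVonNBounded ℝ (T '' B) := by
  have : IsOrderedAddMonoid F := { add_le_add_left := fun _ _ h c => add_le_add_left h c }
  have : OrderClosedTopology F := ⟨isClosed_le_of_isClosed_nonneg hclosed⟩
  obtain ⟨W, hW, hWIcc⟩ := exists_nhds_seq_forall_range_subset_Icc hgen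
  have hT : Continuous T := T.continuous_of_isVonNBounded_image_range hW fun z hz => by
    obtain ⟨u, hu⟩ := hWIcc z hz
    exact (hob (-u) u).subset (image_mono hu)
  exact fun B hB => hB.image (⟨T, hT⟩ : F →L[ℝ] Y)

/-- every order-to-topology bounded linear operator from an ordered Fréchet
space with a closed generating cone to a TVS is topologically bounded. -/
theorem orderToTopologyBounded_implies_bounded
    {F : Type*} [AddCommGroup F] [Module ℝ F] [PartialOrder F]
    [CovariantClass F F (· + ·) (· ≤ ·)] [PosSMulMono ℝ F]
    [UniformSpace F] [IsUniformAddGroup F] [ContinuousSMul ℝ F] [LocallyConvexSpace ℝ F]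
    [FirstCountableTopology F] [T2Space F] [CompleteSpace F]
    {Y : Type*} [AddCommGroup Y] [Module ℝ Y] [TopologicalSpace Y]
    [IsTopologicalAddGroup Y] [ContinuousSMul ℝ Y]
    (hclosed : IsClosed {x : F | 0 ≤ x})
    (hgen : ∀ x : F, ∃ a b : F, 0 ≤ a ∧ 0 ≤ b ∧ x = a - b)
    (T : F →ₗ[ℝ] Y)
    (hob : ∀ a b : F, IsVonNBounded ℝ (T '' Set.Icc a b)) :
    ∀ B : Set F, IsVonNBounded ℝ B → IsVonNBounded ℝ (T '' B) :=
  orderToTopologyBounded_implies_bounded_general hclosed hgen T hob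
end

section
/- Let (F, τ) be an ordered Fréchet space whose positive cone F₊ is τ-closed, generating, and normal, and let (Y, ξ) be a real topological vector space. Then for a linear operator T : F → Y the following are equivalent: (a) T is ru-to-topology continuous; (b) T is order-to-topology bounded; (c) T is topologically bounded. -/
open Filter Set Topology Bornology

universe u

/-!
(b) ⇒ (a): an ru-null net eventually lies in `n⁻¹ • [-u, u]`, and `T [-u, u]` is absorbed by
every neighbourhood of `0`. (c) ⇒ (b): normality of the cone squeezes `ε • [a, b]` to `0`, so
order intervals are bounded. (a) ⇒ (c) rests on Ando's theorem: for a closed generating cone `C`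
of a Fréchet space, `C ∩ U - C ∩ U` is a neighbourhood of `0` for every neighbourhood `U` of `0`
(Baire category gives this up to closure, and a series argument in a string `W` with
`W (n + 1) + W (n + 1) ⊆ W n` removes the closure). Consequently every null sequence has an
ru-null subsequence, so under (a) `T` sends null sequences to sequences with null subsequences,
which already forces `T` to map bounded sets to bounded sets.
-/

open scoped Pointwise

theorem sub_mem_Icc_neg_add {G : Type*} [AddCommGroup G] [PartialOrder G] [IsOrderedAddMonoid G]
    {p q : G} (hp : 0 ≤ p) (hq : 0 ≤ q) : p - q ∈ Icc (-(p + q)) (p + q) := by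
  refine ⟨?_, (sub_le_self p hq).trans (le_add_of_nonneg_right hq)⟩
  rw [neg_add', sub_le_sub_iff_right]
  exact neg_le_self hp

section RelativeUniform

theorem RuConvZero.comp_orderIso {X : Type*} [Zero X] [Neg X] [PartialOrder X] [SMul ℝ X]
    {ι ι' : Type*} [Preorder ι] [Preorder ι'] {x : ι → X} (hx : RuConvZero x) (e : ι' ≃o ι) :
    RuConvZero (x ∘ e) := by
  obtain ⟨u, hu, α, hα, hbound⟩ := hx
  exact ⟨u, hu, e.symm ∘ α, e.symm.monotone.comp hα, fun n hn a ha =>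
    hbound n hn (e a) (e.symm_apply_le.1 ha)⟩

variable {F : Type*} [AddCommGroup F] [PartialOrder F] [Module ℝ F] [PosSMulMono ℝ F]

theorem smul_Icc_neg {c : ℝ} (hc : 0 < c) (u : F) : c • Icc (-u) u = Icc (-(c • u)) (c • u) := by
  rw [← image_smul]
  convert (OrderIso.smulRight hc).image_Icc (-u) u using 2 <;> simp [smul_neg]

theorem ruConvZero_of_forall_mem_Icc [IsOrderedAddMonoid F] {x : ℕ → F} {u : F} (hu : 0 ≤ u)
    (hx : ∀ k : ℕ, x k ∈ Icc (-(((k : ℝ) + 1)⁻¹ • u)) (((k : ℝ) + 1)⁻¹ • u)) :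
    RuConvZero x := by
  refine ⟨u, hu, id, monotone_id, fun n hn k hk => ?_⟩
  have hle : ((k : ℝ) + 1)⁻¹ • u ≤ (n : ℝ)⁻¹ • u :=
    smul_le_smul_of_nonneg_right
      (inv_anti₀ (by positivity) (by exact_mod_cast Nat.le_succ_of_le hk)) hu
  exact ⟨(neg_le_neg hle).trans (hx k).1, (hx k).2.trans hle⟩

theorem RuConvZero.tendsto_of_isVonNBounded_image_Icc {Y : Type*} [AddCommGroup Y] [Module ℝ Y]
    [TopologicalSpace Y] {ι : Type*} [Preorder ι] {x : ι → F} (hx : RuConvZero x) (T : F →ₗ[ℝ] Y)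
    (hT : ∀ u, IsVonNBounded ℝ (T '' Icc (-u) u)) :
    Tendsto (fun a => T (x a)) atTop (𝓝 0) := by
  obtain ⟨u, -, α, -, hα⟩ := hx
  refine (𝓝 (0 : Y)).basis_sets.tendsto_right_iff.2 fun V hV => ?_
  have hsmall : ∀ᶠ n : ℕ in atTop, (n : ℝ)⁻¹ • T '' Icc (-u) u ⊆ V :=
    tendsto_smallSets_iff.1
      ((hT u).tendsto_smallSets_nhds.comp tendsto_inv_atTop_nhds_zero_nat) V hV
  obtain ⟨n, hnV, hn⟩ := (hsmall.and (eventually_gt_atTop 0)).exists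
  filter_upwards [eventually_ge_atTop (α n)] with a ha
  have hxa : x a ∈ (n : ℝ)⁻¹ • Icc (-u) u := by
    rw [smul_Icc_neg (by positivity)]
    exact hα n hn a ha
  rw [← image_smul_set] at hnV
  exact hnV (mem_image_of_mem T hxa)

end RelativeUniform

namespace NormalConeTVS

variable {F : Type*} [AddCommGroup F] [PartialOrder F] [TopologicalSpace F]

theorem tendsto_of_le_of_le (hF : NormalConeTVS F) {ι : Type*} {l : Filter ι} {a b x : ι → F}
    (ha : Tendsto a l (𝓝 0)) (hb : Tendsto b l (𝓝 0)) (hax : ∀ᶠ i in l, a i ≤ x i)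
    (hxb : ∀ᶠ i in l, x i ≤ b i) : Tendsto x l (𝓝 0) := by
  refine (𝓝 (0 : F)).basis_sets.tendsto_right_iff.2 fun U hU => ?_
  obtain ⟨V, hV, hVU, hfull⟩ := hF U hU
  filter_upwards [ha hV, hb hV, hax, hxb] with i hai hbi h₁ h₂
  exact hVU (hfull _ _ _ hai hbi h₁ h₂)

theorem isVonNBounded_Icc [Module ℝ F] [PosSMulMono ℝ F] [ContinuousSMul ℝ F]
    (hF : NormalConeTVS F) (a b : F) : IsVonNBounded ℝ (Icc a b) := by
  have hε := tendsto_inv_atTop_nhds_zero_nat (𝕜 := ℝ)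
  refine isVonNBounded_of_smul_tendsto_zero (ε := fun n : ℕ => (n : ℝ)⁻¹)
    ((eventually_ne_atTop 0).mono fun n hn => by positivity) fun x hx =>
      hF.tendsto_of_le_of_le (by simpa using hε.smul_const a) (by simpa using hε.smul_const b)
        (Eventually.of_forall fun n => ?_) (Eventually.of_forall fun n => ?_)
  · exact smul_le_smul_of_nonneg_left (hx n).1 (by positivity)
  · exact smul_le_smul_of_nonneg_left (hx n).2 (by positivity)

end NormalConeTVS

theorem LinearMap.isVonNBounded_image_of_subseq_tendsto {E Y : Type*} [AddCommGroup E]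
    [Module ℝ E] [TopologicalSpace E] [AddCommGroup Y] [Module ℝ Y] [TopologicalSpace Y]
    [ContinuousSMul ℝ Y] (T : E →ₗ[ℝ] Y)
    (hT : ∀ y : ℕ → E, Tendsto y atTop (𝓝 0) →
      ∃ φ : ℕ → ℕ, Tendsto (fun n => T (y (φ n))) atTop (𝓝 0))
    {B : Set E} (hB : IsVonNBounded ℝ B) : IsVonNBounded ℝ (T '' B) := by
  refine isVonNBounded_of_smul_tendsto_zero (ε := fun n : ℕ => (n : ℝ)⁻¹)
    ((eventually_ne_atTop 0).mono fun n hn => by positivity) fun z hz =>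
      tendsto_of_subseq_tendsto fun ns hns => ?_
  choose x hxB hxz using hz
  obtain ⟨φ, hφ⟩ := hT _ (hB.smul_tendsto_zero (Eventually.of_forall fun k => hxB (ns k))
    (tendsto_inv_atTop_nhds_zero_nat.comp hns))
  exact ⟨φ, by simpa [← hxz] using hφ⟩

/-- A *string* in the sense of Adasch–Ernst–Keim. -/
structure IsConvexString {E : Type*} [AddCommGroup E] [Module ℝ E] [TopologicalSpace E]
    (W : ℕ → Set E) : Prop where
  hasAntitoneBasis : (𝓝 (0 : E)).HasAntitoneBasis W
  absConvex : ∀ n, AbsConvex ℝ (W n)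
  add_subset : ∀ n, W (n + 1) + W (n + 1) ⊆ W n

namespace IsConvexString

section Topological

variable {E : Type*} [AddCommGroup E] [Module ℝ E] [TopologicalSpace E]

theorem _root_.exists_isConvexString [IsTopologicalAddGroup E] [ContinuousSMul ℝ E]
    [LocallyConvexSpace ℝ E] [FirstCountableTopology E] : ∃ W : ℕ → Set E, IsConvexString W := by
  obtain ⟨W, hW, hprop⟩ := exists_nhds_hasAntitoneBasis_absConvex_open_add_closure_subset ℝ E
  exact ⟨W, hW, fun n => (hprop n).2.1, fun n => (hprop n).2.2.1⟩

variable {W : ℕ → Set E} (hW : IsConvexString W)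
include hW

theorem mem_nhds (n : ℕ) : W n ∈ 𝓝 0 := hW.hasAntitoneBasis.mem n

theorem zero_mem (n : ℕ) : (0 : E) ∈ W n := mem_of_mem_nhds (hW.mem_nhds n)

theorem neg_mem {n : ℕ} {x : E} (hx : x ∈ W n) : -x ∈ W n :=
  (hW.absConvex n).1.neg_mem_iff.2 hx

theorem shift (i : ℕ) : IsConvexString fun n => W (n + i) where
  hasAntitoneBasis := hW.hasAntitoneBasis.comp_mono (fun _ _ h => by omega)
    (tendsto_add_atTop_nat i)
  absConvex n := hW.absConvex (n + i)
  add_subset n := by simpa only [Nat.add_right_comm n 1 i] using hW.add_subset (n + i)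

theorem sub_subset (n : ℕ) : W (n + 1) - W (n + 1) ⊆ W n := by
  rintro _ ⟨a, ha, b, hb, rfl⟩
  show a - b ∈ W n
  rw [sub_eq_add_neg]
  exact hW.add_subset n (add_mem_add ha (hW.neg_mem hb))

theorem closure_subset [IsTopologicalAddGroup E] (n : ℕ) : closure (W (n + 1)) ⊆ W n :=
  (closure_subset_add_self_of_mem_nhds_zero (hW.mem_nhds _)).trans (hW.add_subset n)

theorem sum_Ico_mem {t : ℕ → E} (ht : ∀ j, t j ∈ W (j + 1)) (k m : ℕ) :
    ∑ j ∈ Finset.Ico k m, t j ∈ W k := by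
  suffices H : ∀ d k, ∑ j ∈ Finset.Ico k (k + d), t j ∈ W k by
    obtain h | h := le_total k m
    · simpa only [Nat.add_sub_cancel' h] using H (m - k) k
    · simpa only [Finset.Ico_eq_empty_of_le h, Finset.sum_empty] using hW.zero_mem k
  intro d
  induction d with
  | zero => simpa using hW.zero_mem
  | succ d ih =>
    intro k
    rw [Finset.sum_eq_sum_Ico_succ_bot (by omega), show k + (d + 1) = k + 1 + d by omega]
    exact hW.add_subset k (add_mem_add (ht k) (ih (k + 1)))

end Topological

section Complete

variable {E : Type*} [AddCommGroup E] [Module ℝ E] [UniformSpace E] [IsUniformAddGroup E]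
  {W : ℕ → Set E} (hW : IsConvexString W)
include hW

theorem cauchySeq_sum {t : ℕ → E} (ht : ∀ j, t j ∈ W (j + 1)) :
    CauchySeq fun m => ∑ j ∈ Finset.range m, t j := by
  refine hW.hasAntitoneBasis.toHasBasis.uniformity_of_nhds_zero.cauchySeq_iff'.2
    fun i _ => ⟨i, fun n hn => ?_⟩
  show ∑ j ∈ Finset.range i, t j - ∑ j ∈ Finset.range n, t j ∈ W i
  rw [← neg_sub, ← Finset.sum_Ico_eq_sub _ hn]
  exact hW.neg_mem (hW.sum_Ico_mem ht i n)

theorem exists_tendsto_sum [CompleteSpace E] {t : ℕ → E} (ht : ∀ j, t j ∈ W (j + 1)) :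
    ∃ s ∈ closure (W 0), Tendsto (fun m => ∑ j ∈ Finset.range m, t j) atTop (𝓝 s) := by
  obtain ⟨s, hs⟩ := cauchySeq_tendsto_of_complete (hW.cauchySeq_sum ht)
  refine ⟨s, mem_closure_of_tendsto hs (Eventually.of_forall fun m => ?_), hs⟩
  simpa only [Finset.range_eq_Ico] using hW.sum_Ico_mem ht 0 m

end Complete

end IsConvexString

theorem AbsConvex.mem_nhds_zero_of_isClosed_of_absorbent {E : Type*} [AddCommGroup E]
    [Module ℝ E] [TopologicalSpace E] [IsTopologicalAddGroup E] [ContinuousSMul ℝ E] [BaireSpace E]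
    {A : Set E} (hA : AbsConvex ℝ A) (hclosed : IsClosed A) (habs : Absorbent ℝ A) : A ∈ 𝓝 0 := by
  have hcover : ⋃ n : ℕ, ((n : ℝ) + 1) • A = Set.univ := by
    refine eq_univ_of_forall fun x => mem_iUnion.2 ?_
    obtain ⟨r, -, hr⟩ := (habs x).exists_pos
    obtain ⟨n, hn⟩ := exists_nat_ge r
    exact ⟨n, hr _ (by rw [Real.norm_of_nonneg (by positivity)]; linarith) rfl⟩
  obtain ⟨n, hn⟩ := nonempty_interior_of_iUnion_of_closed
    (fun n => hclosed.smul_of_ne_zero (by positivity)) hcover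
  rw [interior_smul₀ (by positivity)] at hn
  obtain ⟨_, y, hy, rfl⟩ := hn
  have h₀ := hA.2.combo_interior_self_mem_interior hy
    (hA.1.neg_mem_iff.2 (interior_subset hy)) (a := 1 / 2) (b := 1 / 2) (by norm_num)
    (by norm_num) (by norm_num)
  rw [smul_neg, add_neg_cancel] at h₀
  exact mem_interior_iff_mem_nhds.1 h₀

theorem absorbent_Ici_inter_sub {F : Type*} [AddCommGroup F] [PartialOrder F] [Module ℝ F]
    [PosSMulMono ℝ F] [TopologicalSpace F] [ContinuousSMul ℝ F]
    (hgen : ∀ x : F, ∃ a b : F, 0 ≤ a ∧ 0 ≤ b ∧ x = a - b) {W : Set F} (hW : W ∈ 𝓝 0) :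
    Absorbent ℝ (Ici 0 ∩ W - Ici 0 ∩ W) := by
  intro z
  obtain ⟨a, b, ha, hb, rfl⟩ := hgen z
  have hsmall : ∀ v : F, 0 ≤ v → ∀ᶠ c : ℝ in 𝓝 0, |c| • v ∈ Ici 0 ∩ W := fun v hv => by
    have : Tendsto (fun c : ℝ => |c| • v) (𝓝 0) (𝓝 0) :=
      (by fun_prop : Continuous fun c : ℝ => |c| • v).tendsto' 0 0 (by simp)
    exact (this.eventually_mem hW).mono fun c hc => ⟨smul_nonneg (abs_nonneg c) hv, hc⟩
  have h₀ : ∀ᶠ c : ℝ in 𝓝 0, |c| • (0 : F) ∈ Ici 0 ∩ W := hsmall 0 le_rfl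
  rw [absorbs_iff_eventually_nhds_zero (by simpa using sub_mem_sub h₀.self_of_nhds h₀.self_of_nhds)]
  filter_upwards [hsmall a ha, hsmall b hb] with c hca hcb
  rintro _ rfl
  rcases le_total 0 c with hc | hc
  · refine ⟨_, hca, _, hcb, ?_⟩
    simp only [abs_of_nonneg hc, smul_sub]
  · refine ⟨_, hcb, _, hca, ?_⟩
    simp only [abs_of_nonpos hc, neg_smul, smul_sub]
    abel

theorem exists_sub_sum_mem_of_subset_closure {G : Type*} [AddCommGroup G] [TopologicalSpace G]
    [IsTopologicalAddGroup G] {S N : ℕ → Set G} (hN : ∀ k, N k ∈ 𝓝 0)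
    (hNS : ∀ k, N k ⊆ closure (S k)) {x : G} (hx : x ∈ N 0) :
    ∃ s : ℕ → G, (∀ k, s k ∈ S k) ∧ ∀ m, x - ∑ j ∈ Finset.range m, s j ∈ N m := by
  have step : ∀ k, ∀ z ∈ N k, ∃ s ∈ S k, z - s ∈ N (k + 1) := fun k z hz => by
    obtain ⟨s, hs, hsz⟩ :=
      mem_closure_iff_nhds_zero.1 (hNS k hz) _ (neg_mem_nhds_zero _ (hN (k + 1)))
    exact ⟨s, hs, by simpa only [Set.mem_neg, neg_sub] using hsz⟩
  choose! σ hσS hσN using step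
  let r : ℕ → G := fun m => Nat.rec x (fun k z => z - σ k z) m
  have hr : ∀ m, r m ∈ N m := fun m => Nat.rec hx (fun k ih => hσN k _ ih) m
  have hr_eq : ∀ m, r m = x - ∑ j ∈ Finset.range m, σ j (r j) := fun m => by
    induction m with
    | zero => simp [r]
    | succ m ih => rw [Finset.sum_range_succ, ← sub_sub, ← ih]
  exact ⟨fun k => σ k (r k), fun k => hσS k _ (hr k), fun m => hr_eq m ▸ hr m⟩

section OrderedFrechet

variable {F : Type*} [AddCommGroup F] [PartialOrder F] [IsOrderedAddMonoid F] [Module ℝ F]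
  [PosSMulMono ℝ F]

theorem closure_Ici_inter_sub_mem_nhds [TopologicalSpace F] [IsTopologicalAddGroup F]
    [ContinuousSMul ℝ F] [BaireSpace F] (hgen : ∀ x : F, ∃ a b : F, 0 ≤ a ∧ 0 ≤ b ∧ x = a - b)
    {W : Set F} (hW : W ∈ 𝓝 0) (hWc : Convex ℝ W) :
    closure (Ici 0 ∩ W - Ici 0 ∩ W) ∈ 𝓝 0 := by
  have hconv : Convex ℝ (Ici 0 ∩ W - Ici 0 ∩ W) :=
    ((convex_Ici 0).inter hWc).sub ((convex_Ici 0).inter hWc)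
  have hbal : Balanced ℝ (Ici 0 ∩ W - Ici 0 ∩ W) := (balanced_iff_neg_mem hconv).2 <| by
    rintro _ ⟨p, hp, q, hq, rfl⟩
    exact ⟨q, hq, p, hp, (neg_sub p q).symm⟩
  exact AbsConvex.mem_nhds_zero_of_isClosed_of_absorbent (AbsConvex.closure ⟨hbal, hconv⟩)
    isClosed_closure ((absorbent_Ici_inter_sub hgen hW).mono subset_closure)

variable [UniformSpace F] [IsUniformAddGroup F] [ContinuousSMul ℝ F] [FirstCountableTopology F]
  [CompleteSpace F] [OrderClosedTopology F]

theorem IsConvexString.Ici_inter_closure_sub_mem_nhds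
    (hgen : ∀ x : F, ∃ a b : F, 0 ≤ a ∧ 0 ≤ b ∧ x = a - b) {W : ℕ → Set F}
    (hW : IsConvexString W) : Ici 0 ∩ closure (W 0) - Ici 0 ∩ closure (W 0) ∈ 𝓝 0 := by
  -- makes `F` completely pseudometrizable, hence a Baire space
  have := IsUniformAddGroup.uniformity_countably_generated (α := F)
  set N : ℕ → Set F := fun k => closure (Ici 0 ∩ W (k + 2) - Ici 0 ∩ W (k + 2))
  have hN : ∀ k, N k ∈ 𝓝 0 := fun k =>
    closure_Ici_inter_sub_mem_nhds hgen (hW.mem_nhds _) (hW.absConvex _).2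
  have hNW : ∀ k, N k ⊆ W k := fun k =>
    (closure_mono ((sub_subset_sub inter_subset_right inter_subset_right).trans
      (hW.sub_subset (k + 1)))).trans (hW.closure_subset k)
  refine mem_of_superset (hN 0) fun x hx => ?_
  obtain ⟨s, hs, hxs⟩ := exists_sub_sum_mem_of_subset_closure hN (fun k => subset_rfl) hx
  choose p hp q hq hpq using hs
  have hmono : ∀ j, W (j + 2) ⊆ W (j + 1) := fun j => hW.hasAntitoneBasis.antitone (by omega)
  obtain ⟨P, hPW, hP⟩ := hW.exists_tendsto_sum fun j => hmono j (hp j).2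
  obtain ⟨Q, hQW, hQ⟩ := hW.exists_tendsto_sum fun j => hmono j (hq j).2
  have hlim : Tendsto (fun m => x - ∑ j ∈ Finset.range m, s j) atTop (𝓝 (x - (P - Q))) := by
    simp only [← hpq, Finset.sum_sub_distrib]
    exact tendsto_const_nhds.sub (hP.sub hQ)
  have hx_eq : x - (P - Q) = 0 :=
    tendsto_nhds_unique hlim (hW.hasAntitoneBasis.tendsto fun m => hNW m (hxs m))
  refine ⟨P, ⟨ge_of_tendsto' hP fun m => Finset.sum_nonneg fun j _ => (hp j).1, hPW⟩,
    Q, ⟨ge_of_tendsto' hQ fun m => Finset.sum_nonneg fun j _ => (hq j).1, hQW⟩, ?_⟩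
  exact (sub_eq_zero.1 hx_eq).symm

theorem Ici_inter_sub_Ici_inter_mem_nhds [LocallyConvexSpace ℝ F]
    (hgen : ∀ x : F, ∃ a b : F, 0 ≤ a ∧ 0 ≤ b ∧ x = a - b) {U : Set F} (hU : U ∈ 𝓝 0) :
    Ici 0 ∩ U - Ici 0 ∩ U ∈ 𝓝 0 := by
  obtain ⟨W, hW⟩ := exists_isConvexString (E := F)
  obtain ⟨i, hi⟩ := hW.hasAntitoneBasis.mem_iff.1 hU
  have hsub : closure (W (0 + (i + 1))) ⊆ U := by
    simpa only [zero_add] using (hW.closure_subset i).trans hi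
  exact mem_of_superset ((hW.shift (i + 1)).Ici_inter_closure_sub_mem_nhds hgen)
    (sub_subset_sub (inter_subset_inter_right _ hsub) (inter_subset_inter_right _ hsub))

theorem exists_strictMono_ruConvZero [LocallyConvexSpace ℝ F]
    (hgen : ∀ x : F, ∃ a b : F, 0 ≤ a ∧ 0 ≤ b ∧ x = a - b) {y : ℕ → F}
    (hy : Tendsto y atTop (𝓝 0)) : ∃ φ : ℕ → ℕ, StrictMono φ ∧ RuConvZero (y ∘ φ) := by
  obtain ⟨W, hW⟩ := exists_isConvexString (E := F)
  have hG : ∀ k : ℕ, (((k : ℝ) + 1) • ·) ⁻¹' W (k + 2) ∈ 𝓝 (0 : F) := fun k =>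
    (continuous_const_smul _).tendsto' 0 0 (smul_zero _) (hW.mem_nhds _)
  obtain ⟨φ, hφ, hyφ⟩ := extraction_forall_of_eventually fun k =>
    hy.eventually_mem (Ici_inter_sub_Ici_inter_mem_nhds hgen (hG k))
  choose p hp q hq hpq using hyφ
  set t : ℕ → F := fun k => ((k : ℝ) + 1) • p k + ((k : ℝ) + 1) • q k
  have ht0 : ∀ k, 0 ≤ t k := fun k =>
    add_nonneg (smul_nonneg (by positivity) (hp k).1) (smul_nonneg (by positivity) (hq k).1)
  obtain ⟨u, -, hu⟩ :=
    hW.exists_tendsto_sum fun k => hW.add_subset _ (add_mem_add (hp k).2 (hq k).2)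
  have htu : ∀ k, t k ≤ u := fun k =>
    (Finset.single_le_sum (fun j _ => ht0 j) (Finset.self_mem_range_succ k)).trans
      ((Finset.sum_mono_set_of_nonneg ht0).comp Finset.range_mono |>.ge_of_tendsto hu (k + 1))
  refine ⟨φ, hφ, ruConvZero_of_forall_mem_Icc
    (ge_of_tendsto' hu fun m => Finset.sum_nonneg fun j _ => ht0 j) fun k => ?_⟩
  have hle : p k + q k ≤ ((k : ℝ) + 1)⁻¹ • u := calc
    p k + q k = ((k : ℝ) + 1)⁻¹ • t k := by
      simp only [t, smul_add, smul_smul, inv_mul_cancel₀ (by positivity : (k : ℝ) + 1 ≠ 0),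
        one_smul]
    _ ≤ ((k : ℝ) + 1)⁻¹ • u := smul_le_smul_of_nonneg_left (htu k) (by positivity)
  rw [Function.comp_apply, ← hpq k]
  exact Icc_subset_Icc (neg_le_neg hle) hle (sub_mem_Icc_neg_add (hp k).1 (hq k).1)

end OrderedFrechet

theorem ruContinuous_iff_orderToTopologyBounded_iff_bounded_general
    {F : Type*} [AddCommGroup F] [Module ℝ F] [PartialOrder F]
    [CovariantClass F F (· + ·) (· ≤ ·)] [PosSMulMono ℝ F]
    [UniformSpace F] [IsUniformAddGroup F] [ContinuousSMul ℝ F] [LocallyConvexSpace ℝ F]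
    [FirstCountableTopology F] [CompleteSpace F]
    {Y : Type*} [AddCommGroup Y] [Module ℝ Y] [TopologicalSpace Y]
    [ContinuousSMul ℝ Y]
    (hclosed : IsClosed {x : F | 0 ≤ x})
    (hgen : ∀ x : F, ∃ a b : F, 0 ≤ a ∧ 0 ≤ b ∧ x = a - b)
    (hnormal : NormalConeTVS F)
    (T : F →ₗ[ℝ] Y) :
    ((∀ (ι : Type*) [Preorder ι] [Nonempty ι] [IsDirected ι (· ≤ ·)] (x : ι → F),
        RuConvZero x → Tendsto (fun a => T (x a)) atTop (𝓝 0)) ↔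
      (∀ a b : F, IsVonNBounded ℝ (T '' Set.Icc a b))) ∧
    ((∀ a b : F, IsVonNBounded ℝ (T '' Set.Icc a b)) ↔
      (∀ B : Set F, IsVonNBounded ℝ B → IsVonNBounded ℝ (T '' B))) := by
  have : IsOrderedAddMonoid F := { add_le_add_left := fun _ _ h c => add_le_add_left h c }
  have : OrderClosedTopology F := ⟨isClosed_le_of_isClosed_nonneg hclosed⟩
  have hseq_c : (∀ x : ℕ → F, RuConvZero x → Tendsto (fun n => T (x n)) atTop (𝓝 0)) →
      ∀ B : Set F, IsVonNBounded ℝ B → IsVonNBounded ℝ (T '' B) := fun ha B hB =>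
    T.isVonNBounded_image_of_subseq_tendsto (fun y hy =>
      let ⟨φ, _, hφ⟩ := exists_strictMono_ruConvZero hgen hy
      ⟨φ, ha _ hφ⟩) hB
  have hc_b : (∀ B : Set F, IsVonNBounded ℝ B → IsVonNBounded ℝ (T '' B)) →
      ∀ a b : F, IsVonNBounded ℝ (T '' Icc a b) :=
    fun hc a b => hc _ (hnormal.isVonNBounded_Icc a b)
  refine ⟨⟨fun ha => hc_b (hseq_c fun x hx => ?_), fun hb ι _ _ _ x hx =>
      hx.tendsto_of_isVonNBounded_image_Icc T fun u => hb (-u) u⟩,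
    ⟨fun hb => hseq_c fun x hx => hx.tendsto_of_isVonNBounded_image_Icc T fun u => hb (-u) u,
      hc_b⟩⟩
  exact (ha _ _ (hx.comp_orderIso ULift.orderIso)).comp
    (ULift.orderIso (α := ℕ)).symm.tendsto_atTop

/-- for a linear operator from an ordered Fréchet space with a closed
generating normal cone to a TVS, the following are equivalent:
(a) ru-to-topology continuous; (b) order-to-topology bounded; (c) topologically bounded. -/
theorem ruContinuous_iff_orderToTopologyBounded_iff_bounded
    {F : Type*} [AddCommGroup F] [Module ℝ F] [PartialOrder F]
    [CovariantClass F F (· + ·) (· ≤ ·)] [PosSMulMono ℝ F]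
    [UniformSpace F] [IsUniformAddGroup F] [ContinuousSMul ℝ F] [LocallyConvexSpace ℝ F]
    [FirstCountableTopology F] [T2Space F] [CompleteSpace F]
    {Y : Type*} [AddCommGroup Y] [Module ℝ Y] [TopologicalSpace Y]
    [IsTopologicalAddGroup Y] [ContinuousSMul ℝ Y]
    (hclosed : IsClosed {x : F | 0 ≤ x})
    (hgen : ∀ x : F, ∃ a b : F, 0 ≤ a ∧ 0 ≤ b ∧ x = a - b)
    (hnormal : NormalConeTVS F)
    (T : F →ₗ[ℝ] Y) :
    ((∀ (ι : Type*) [Preorder ι] [Nonempty ι] [IsDirected ι (· ≤ ·)] (x : ι → F),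
        RuConvZero x → Tendsto (fun a => T (x a)) atTop (𝓝 0)) ↔
      (∀ a b : F, IsVonNBounded ℝ (T '' Set.Icc a b))) ∧
    ((∀ a b : F, IsVonNBounded ℝ (T '' Set.Icc a b)) ↔
      (∀ B : Set F, IsVonNBounded ℝ B → IsVonNBounded ℝ (T '' B))) :=
  ruContinuous_iff_orderToTopologyBounded_iff_bounded_general hclosed hgen hnormal T
end

section
/- Let (F, τ) be an ordered Fréchet space whose positive cone F₊ is τ-closed, generating, and normal, and let (Y, ξ) be an ordered real topological vector space whose positive cone is generating and normal. Then every order bounded linear operator T : F → Y is topologically bounded. -/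
open Filter Set Topology Bornology

universe u

/-!
Every null sequence `zₙ` in `F` has a subsequence with `-u ≤ k • z_{φ k} ≤ u` for a single
`u ≥ 0`. Indeed, Baire category and completeness upgrade the generating closed cone to a
quantitative decomposition (Krein–Šmulian, Ando): small vectors are differences `p - q` of small
`p, q ≥ 0`. Choosing `φ k` so that the pieces `p_k + q_k` are summable, `u` is their sum.
Order boundedness maps `[-u, u]` into an order interval of `Y`, which is topologically bounded
by normality, so `T` sends null sequences to sequences with null subsequences; since bounded sets
are detected by the sequences `εₙ • yₙ`, `T '' B` is bounded.
-/

open Pointwise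

structure IsHalvingNhdsBasis {G : Type*} [AddGroup G] [TopologicalSpace G] (U : ℕ → Set G) :
    Prop where
  hasBasis : (𝓝 (0 : G)).HasBasis (fun _ => True) U
  isClosed : ∀ n, IsClosed (U n)
  neg_eq : ∀ n, -U n = U n
  add_subset : ∀ n, U (n + 1) + U (n + 1) ⊆ U n

theorem exists_isHalvingNhdsBasis_subset {G : Type*} [AddCommGroup G] [TopologicalSpace G]
    [IsTopologicalAddGroup G] [FirstCountableTopology G] {W : Set G} (hW : W ∈ 𝓝 (0 : G)) :
    ∃ U : ℕ → Set G, IsHalvingNhdsBasis U ∧ U 0 ⊆ W := by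
  obtain ⟨b, hb⟩ := (𝓝 (0 : G)).exists_antitone_basis
  choose! half half_mem half_closed half_neg half_add using
    fun S (hS : S ∈ 𝓝 (0 : G)) => exists_closed_nhds_zero_neg_eq_add_subset hS
  let S : ℕ → Set G := fun n => Nat.rec (W ∩ b 0) (fun n V => half V ∩ b (n + 1)) n
  have hS : ∀ n, S n ∈ 𝓝 0 := by
    intro n
    induction n with
    | zero => exact inter_mem hW (hb.mem 0)
    | succ n ih => exact inter_mem (half_mem _ ih) (hb.mem (n + 1))
  have half_subset : ∀ n, half (S n) ⊆ S n := fun n =>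
    (subset_add_left _ (mem_of_mem_nhds (half_mem _ (hS n)))).trans (half_add _ (hS n))
  have hS_b : ∀ n, S n ⊆ b n := by
    rintro (_ | n) <;> exact inter_subset_right
  refine ⟨fun n => half (S n), ⟨hb.toHasBasis.to_hasBasis
      (fun n _ => ⟨n, trivial, (half_subset n).trans (hS_b n)⟩)
      (fun n _ => hb.toHasBasis.mem_iff.mp (half_mem _ (hS n))),
      fun n => half_closed _ (hS n), fun n => half_neg _ (hS n),
      fun n => (half_add _ (hS (n + 1))).trans inter_subset_left⟩,
      (half_subset 0).trans inter_subset_left⟩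

namespace IsHalvingNhdsBasis

variable {G : Type*} [AddCommGroup G] [TopologicalSpace G] {U : ℕ → Set G}

theorem mem_nhds (hU : IsHalvingNhdsBasis U) (n : ℕ) : U n ∈ 𝓝 (0 : G) :=
  hU.hasBasis.mem_of_mem trivial

theorem zero_mem (hU : IsHalvingNhdsBasis U) (n : ℕ) : (0 : G) ∈ U n :=
  mem_of_mem_nhds (hU.mem_nhds n)

theorem antitone (hU : IsHalvingNhdsBasis U) : Antitone U :=
  antitone_nat_of_succ_le fun n =>
    (subset_add_left _ (hU.zero_mem (n + 1))).trans (hU.add_subset n)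

theorem sub_subset (hU : IsHalvingNhdsBasis U) (n : ℕ) : U (n + 1) - U (n + 1) ⊆ U n := by
  rw [sub_eq_add_neg, hU.neg_eq]
  exact hU.add_subset n

theorem tendsto_zero (hU : IsHalvingNhdsBasis U) {x : ℕ → G} (hx : ∀ n, x n ∈ U n) :
    Tendsto x atTop (𝓝 0) :=
  hU.hasBasis.tendsto_right_iff.mpr fun i _ =>
    (eventually_ge_atTop i).mono fun n hn => hU.antitone hn (hx n)

theorem sum_Ico_mem (hU : IsHalvingNhdsBasis U) {v : ℕ → G} (hv : ∀ k, v k ∈ U (k + 1))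
    {m n : ℕ} (hmn : m ≤ n) : ∑ k ∈ Finset.Ico m n, v k ∈ U m := by
  obtain ⟨d, rfl⟩ := Nat.exists_eq_add_of_le hmn
  induction d generalizing m with
  | zero => simpa using hU.zero_mem m
  | succ d ih =>
    rw [Finset.sum_eq_sum_Ico_succ_bot (by omega), show m + (d + 1) = m + 1 + d by omega]
    exact hU.add_subset m (add_mem_add (hv m) (ih (by omega)))

theorem sub_sum_range_mem (hU : IsHalvingNhdsBasis U) {v : ℕ → G} (hv : ∀ k, v k ∈ U (k + 1))
    {m n : ℕ} (i : ℕ) (hm : i ≤ m) (hn : i ≤ n) :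
    ∑ k ∈ Finset.range n, v k - ∑ k ∈ Finset.range m, v k ∈ U i := by
  rcases le_total m n with h | h
  · rw [← Finset.sum_Ico_eq_sub _ h]
    exact hU.antitone hm (hU.sum_Ico_mem hv h)
  · rw [← neg_sub, ← Finset.sum_Ico_eq_sub _ h, ← Set.mem_neg, hU.neg_eq]
    exact hU.antitone hn (hU.sum_Ico_mem hv h)

end IsHalvingNhdsBasis

theorem IsHalvingNhdsBasis.cauchySeq_sum_range {G : Type*} [AddCommGroup G] [UniformSpace G]
    [IsUniformAddGroup G] {U : ℕ → Set G} (hU : IsHalvingNhdsBasis U) {v : ℕ → G}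
    (hv : ∀ k, v k ∈ U (k + 1)) : CauchySeq fun n => ∑ k ∈ Finset.range n, v k :=
  hU.hasBasis.uniformity_of_nhds_zero.cauchySeq_iff.mpr fun i _ =>
    ⟨i, fun _ hm _ hn => hU.sub_sum_range_mem hv i hm hn⟩

theorem IsHalvingNhdsBasis.exists_tendsto_sum_range {G : Type*} [AddCommGroup G] [UniformSpace G]
    [IsUniformAddGroup G] [CompleteSpace G] {U : ℕ → Set G} (hU : IsHalvingNhdsBasis U) {v : ℕ → G}
    (hv : ∀ k, v k ∈ U (k + 1)) :
    ∃ s ∈ U 0, Tendsto (fun n => ∑ k ∈ Finset.range n, v k) atTop (𝓝 s) := by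
  obtain ⟨s, hs⟩ := cauchySeq_tendsto_of_complete (hU.cauchySeq_sum_range hv)
  refine ⟨s, (hU.isClosed 0).mem_of_tendsto hs (Eventually.of_forall fun n => ?_), hs⟩
  simpa using hU.sum_Ico_mem hv (Nat.zero_le n)

theorem exists_seq_sub_sum_range_mem {G : Type*} [AddCommGroup G] {R P : ℕ → Set G}
    (hstep : ∀ n, ∀ y ∈ R n, ∃ x ∈ P n, y - x ∈ R (n + 1)) {y : G} (hy : y ∈ R 0) :
    ∃ x : ℕ → G, (∀ n, x n ∈ P n) ∧ ∀ n, y - ∑ k ∈ Finset.range n, x k ∈ R n := by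
  choose! f hfP hfR using hstep
  let r : ℕ → G := fun n => Nat.rec y (fun n z => z - f n z) n
  have hr : ∀ n, r n ∈ R n := by
    intro n
    induction n with
    | zero => exact hy
    | succ n ih => exact hfR n _ ih
  have hr_eq : ∀ n, r n = y - ∑ k ∈ Finset.range n, f k (r k) := by
    intro n
    induction n with
    | zero => simp [r]
    | succ n ih =>
      rw [Finset.sum_range_succ, sub_add_eq_sub_sub, ← ih]
  exact ⟨fun n => f n (r n), fun n => hfP n _ (hr n), fun n => hr_eq n ▸ hr n⟩

theorem orderClosedTopology_of_isClosed_Ici {G : Type*} [AddCommGroup G] [TopologicalSpace G]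
    [IsTopologicalAddGroup G] [PartialOrder G] [AddLeftMono G] (h : IsClosed (Ici (0 : G))) :
    OrderClosedTopology G where
  isClosed_le' := by
    have := h.preimage (continuous_snd.sub continuous_fst : Continuous fun p : G × G => p.2 - p.1)
    simpa only [preimage, mem_Ici, Pi.sub_apply, sub_nonneg] using this

theorem sum_range_le_of_tendsto {G : Type*} [AddCommGroup G] [TopologicalSpace G] [PartialOrder G]
    [AddLeftMono G] [OrderClosedTopology G] {v : ℕ → G} (hv : ∀ k, 0 ≤ v k) {s : G}
    (hs : Tendsto (fun n => ∑ k ∈ Finset.range n, v k) atTop (𝓝 s)) (n : ℕ) :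
    ∑ k ∈ Finset.range n, v k ≤ s :=
  (monotone_nat_of_le_succ fun n => by
    rw [Finset.sum_range_succ]; exact le_add_of_nonneg_right (hv n)).ge_of_tendsto hs n

theorem mem_nhds_zero_of_isClosed_of_convex {E : Type*} [AddCommGroup E] [Module ℝ E]
    [TopologicalSpace E] [IsTopologicalAddGroup E] [ContinuousConstSMul ℝ E] [BaireSpace E]
    {K : Set E} (hcl : IsClosed K) (hconv : Convex ℝ K) (hneg : -K = K) (habs : Absorbent ℝ K) :
    K ∈ 𝓝 0 := by
  have hcover : ⋃ n : ℕ, ((n : ℝ) + 1) • K = univ := by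
    refine eq_univ_of_forall fun x => mem_iUnion.mpr ?_
    obtain ⟨r, hr⟩ := absorbs_iff_norm.mp (habs x)
    obtain ⟨n, hn⟩ := exists_nat_ge r
    refine ⟨n, singleton_subset_iff.mp (hr _ ?_)⟩
    rw [Real.norm_of_nonneg (by positivity)]
    linarith
  obtain ⟨n, x, hx⟩ := nonempty_interior_of_iUnion_of_closed
    (fun n : ℕ => hcl.smul_of_ne_zero (by positivity : (n : ℝ) + 1 ≠ 0)) hcover
  set c : ℝ := (n : ℝ) + 1
  have hc : c ≠ 0 := by positivity
  have hneg_x : -x ∈ c • K := by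
    rw [← hneg, smul_set_neg]
    exact neg_mem_neg.mpr (interior_subset hx)
  have hnear : ∀ᶠ y in 𝓝 (0 : E), x + (2 * c) • y ∈ c • K := by
    have hg : Tendsto (fun y : E => x + (2 * c) • y) (𝓝 0) (𝓝 x) := by
      simpa using (tendsto_const_nhds (x := x)).add ((continuous_const_smul (2 * c)).tendsto 0)
    exact hg (mem_interior_iff_mem_nhds.mp hx)
  filter_upwards [hnear] with y hy
  have hmid : (2⁻¹ : ℝ) • (x + (2 * c) • y) + (2⁻¹ : ℝ) • -x ∈ c • K :=
    (hconv.smul c) hy hneg_x (by norm_num) (by norm_num) (by norm_num)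
  rw [← smul_mem_smul_set_iff₀ hc]
  convert hmid using 1
  module

section PositiveCone

variable {E : Type*} [AddCommGroup E] [Module ℝ E] [TopologicalSpace E] [PartialOrder E]

theorem absorbent_inter_Ici_sub [ContinuousSMul ℝ E] [PosSMulMono ℝ E]
    (hgen : ∀ x : E, ∃ a b : E, 0 ≤ a ∧ 0 ≤ b ∧ x = a - b) {U : Set E} (hU : U ∈ 𝓝 0) :
    Absorbent ℝ (Ici 0 ∩ U - Ici 0 ∩ U) := by
  have hsmall : ∀ z : E, 0 ≤ z → ∀ᶠ c in 𝓝 (0 : ℝ), |c| • z ∈ Ici 0 ∩ U := fun z hz => by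
    have hlim : Tendsto (fun c : ℝ => |c| • z) (𝓝 0) (𝓝 0) := by
      simpa using ((continuous_abs (G := ℝ)).tendsto 0).smul_const z
    exact (hlim.eventually_mem hU).mono fun c hc => ⟨smul_nonneg (abs_nonneg c) hz, hc⟩
  rw [absorbent_iff_eventually_nhdsNE_zero]
  intro x
  obtain ⟨a, b, ha, hb, rfl⟩ := hgen x
  filter_upwards [nhdsWithin_le_nhds (hsmall a ha), nhdsWithin_le_nhds (hsmall b hb)]
    with c hca hcb
  rcases le_total 0 c with hc | hc
  · exact ⟨_, hca, _, hcb, by rw [abs_of_nonneg hc, smul_sub]⟩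
  · exact ⟨_, hcb, _, hca, by rw [abs_of_nonpos hc]; module⟩

theorem closure_inter_Ici_sub_mem_nhds [IsTopologicalAddGroup E] [ContinuousSMul ℝ E]
    [LocallyConvexSpace ℝ E] [BaireSpace E] [AddLeftMono E] [PosSMulMono ℝ E]
    (hgen : ∀ x : E, ∃ a b : E, 0 ≤ a ∧ 0 ≤ b ∧ x = a - b) {W : Set E} (hW : W ∈ 𝓝 0) :
    closure (Ici 0 ∩ W - Ici 0 ∩ W) ∈ 𝓝 0 := by
  obtain ⟨U, ⟨hU, hUconv⟩, hUW⟩ := (LocallyConvexSpace.convex_basis_zero ℝ E).mem_iff.mp hW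
  have hcone : Convex ℝ (Ici (0 : E)) := fun _ hx _ hy _ _ ha hb _ =>
    add_nonneg (smul_nonneg ha hx) (smul_nonneg hb hy)
  have hUW' : Ici 0 ∩ U ⊆ Ici 0 ∩ W := inter_subset_inter_right _ hUW
  refine mem_of_superset (mem_nhds_zero_of_isClosed_of_convex isClosed_closure ?_ ?_
    ((absorbent_inter_Ici_sub hgen hU).mono subset_closure))
    (closure_mono (sub_subset_sub hUW' hUW'))
  · exact ((hcone.inter hUconv).sub (hcone.inter hUconv)).closure
  · rw [neg_closure, neg_sub]

end PositiveCone

theorem inter_Ici_sub_mem_nhds_of_closure {G : Type*} [AddCommGroup G] [UniformSpace G]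
    [IsUniformAddGroup G] [FirstCountableTopology G] [CompleteSpace G] [PartialOrder G]
    [AddLeftMono G] [OrderClosedTopology G]
    (h : ∀ W ∈ 𝓝 (0 : G), closure (Ici 0 ∩ W - Ici 0 ∩ W) ∈ 𝓝 0) {W : Set G}
    (hW : W ∈ 𝓝 0) : Ici 0 ∩ W - Ici 0 ∩ W ∈ 𝓝 0 := by
  obtain ⟨U, hU, hUW⟩ := exists_isHalvingNhdsBasis_subset hW
  set D : ℕ → Set G := fun n => Ici 0 ∩ U n - Ici 0 ∩ U n
  have hD : ∀ n, closure (D (n + 1)) ⊆ U n := fun n =>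
    (hU.isClosed n).closure_subset_iff.mpr
      ((sub_subset_sub inter_subset_right inter_subset_right).trans (hU.sub_subset n))
  have hstep : ∀ n, ∀ z ∈ closure (D (n + 1)),
      ∃ x ∈ D (n + 1), z - x ∈ closure (D (n + 1 + 1)) := by
    intro n z hz
    obtain ⟨x, hxD, hxz⟩ :=
      mem_closure_iff_nhds_zero.mp hz _ (neg_mem_nhds_zero G (h _ (hU.mem_nhds (n + 2))))
    exact ⟨x, hxD, by simpa using hxz⟩
  refine mem_of_superset (h _ (hU.mem_nhds 1)) fun y hy => ?_
  obtain ⟨x, hxD, hyx⟩ := exists_seq_sub_sum_range_mem hstep hy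
  choose p hp q hq hpq using hxD
  obtain ⟨p', hp'U, hp'⟩ := hU.exists_tendsto_sum_range fun k => (hp k).2
  obtain ⟨q', hq'U, hq'⟩ := hU.exists_tendsto_sum_range fun k => (hq k).2
  have hlim : Tendsto (fun n => y - ∑ k ∈ Finset.range n, x k) atTop (𝓝 (y - (p' - q'))) := by
    simpa only [← hpq, Finset.sum_sub_distrib] using tendsto_const_nhds.sub (hp'.sub hq')
  have hy_eq : y - (p' - q') = 0 :=
    tendsto_nhds_unique hlim (hU.tendsto_zero fun n => hD n (hyx n))
  refine ⟨p', ⟨?_, hUW hp'U⟩, q', ⟨?_, hUW hq'U⟩, (sub_eq_zero.mp hy_eq).symm⟩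
  · simpa using sum_range_le_of_tendsto (fun k => (hp k).1) hp' 0
  · simpa using sum_range_le_of_tendsto (fun k => (hq k).1) hq' 0

theorem RuConvZero.of_natCast_smul_mem_Icc {X : Type*} [AddCommGroup X] [Module ℝ X]
    [PartialOrder X] [AddLeftMono X] [PosSMulMono ℝ X] {x : ℕ → X} {u : X}
    (h : ∀ k : ℕ, (k : ℝ) • x k ∈ Icc (-u) u) : RuConvZero x := by
  have hu : 0 ≤ u := by simpa using (h 0).2
  refine ⟨u, hu, id, monotone_id, fun n hn k hk => ?_⟩
  have hk₀ : (0 : ℝ) < k := by exact_mod_cast hn.trans_le hk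
  have hscale : (k : ℝ)⁻¹ • u ≤ (n : ℝ)⁻¹ • u := by
    rw [← sub_nonneg, ← sub_smul]
    exact smul_nonneg (sub_nonneg.mpr (inv_anti₀ (by exact_mod_cast hn) (by exact_mod_cast hk))) hu
  have hx : x k = (k : ℝ)⁻¹ • ((k : ℝ) • x k) := (inv_smul_smul₀ hk₀.ne' _).symm
  obtain ⟨hlow, hup⟩ := h k
  constructor
  · calc -((n : ℝ)⁻¹ • u) ≤ -((k : ℝ)⁻¹ • u) := neg_le_neg_iff.mpr hscale
      _ = (k : ℝ)⁻¹ • -u := (smul_neg _ _).symm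
      _ ≤ x k := hx ▸ smul_le_smul_of_nonneg_left hlow (inv_nonneg.mpr hk₀.le)
  · calc x k ≤ (k : ℝ)⁻¹ • u := hx ▸ smul_le_smul_of_nonneg_left hup (inv_nonneg.mpr hk₀.le)
      _ ≤ (n : ℝ)⁻¹ • u := hscale

theorem exists_strictMono_ruConvZero_comp {F : Type*} [AddCommGroup F] [Module ℝ F]
    [UniformSpace F] [IsUniformAddGroup F] [ContinuousConstSMul ℝ F] [FirstCountableTopology F]
    [CompleteSpace F] [PartialOrder F] [AddLeftMono F] [PosSMulMono ℝ F] [OrderClosedTopology F]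
    (hdec : ∀ W ∈ 𝓝 (0 : F), Ici 0 ∩ W - Ici 0 ∩ W ∈ 𝓝 0) {z : ℕ → F}
    (hz : Tendsto z atTop (𝓝 0)) : ∃ φ : ℕ → ℕ, StrictMono φ ∧ RuConvZero (z ∘ φ) := by
  obtain ⟨M, hM, -⟩ := exists_isHalvingNhdsBasis_subset (univ_mem (f := 𝓝 (0 : F)))
  have hkz : ∀ k : ℕ, Tendsto (fun j => (k : ℝ) • z j) atTop (𝓝 0) := fun k => by
    simpa using hz.const_smul (k : ℝ)
  obtain ⟨φ, hφ, hφz⟩ := extraction_forall_of_eventually fun k =>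
    (hkz k).eventually_mem (hdec _ (hM.mem_nhds (k + 2)))
  choose p hp q hq hpq using hφz
  have hpq_mem : ∀ k, p k + q k ∈ M (k + 1) := fun k =>
    hM.add_subset (k + 1) (add_mem_add (hp k).2 (hq k).2)
  have hpq_nonneg : ∀ k, 0 ≤ p k + q k := fun k => add_nonneg (hp k).1 (hq k).1
  obtain ⟨u, -, hu⟩ := hM.exists_tendsto_sum_range hpq_mem
  have hle : ∀ k, p k + q k ≤ u := fun k =>
    (Finset.single_le_sum (fun j _ => hpq_nonneg j) (Finset.self_mem_range_succ k)).trans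
      (sum_range_le_of_tendsto hpq_nonneg hu (k + 1))
  refine ⟨φ, hφ, RuConvZero.of_natCast_smul_mem_Icc (u := u) fun k => ?_⟩
  rw [Function.comp_apply, ← hpq k]
  constructor
  · calc -u ≤ -(p k + q k) := neg_le_neg_iff.mpr (hle k)
      _ ≤ -q k := neg_le_neg_iff.mpr (le_add_of_nonneg_left (hp k).1)
      _ ≤ p k - q k := by rw [sub_eq_neg_add]; exact le_add_of_nonneg_right (hp k).1
  · calc p k - q k ≤ p k := sub_le_self _ (hq k).1
      _ ≤ p k + q k := le_add_of_nonneg_right (hq k).1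
      _ ≤ u := hle k

theorem NormalConeTVS.isVonNBounded_Icc_s4 {Y : Type*} [AddCommGroup Y] [Module ℝ Y]
    [TopologicalSpace Y] [ContinuousSMul ℝ Y] [PartialOrder Y] [AddLeftMono Y] [PosSMulMono ℝ Y]
    (hY : NormalConeTVS Y) (c d : Y) : IsVonNBounded ℝ (Icc c d) := by
  intro V hV
  obtain ⟨V₁, hV₁, hV₁V, hfull⟩ := hY V hV
  have hsmall : ∀ y : Y, ∀ᶠ r in 𝓝 (0 : ℝ), r • y ∈ V₁ := fun y => by
    have hlim : Tendsto (fun r : ℝ => r • y) (𝓝 0) (𝓝 0) := by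
      simpa using (tendsto_id (x := 𝓝 (0 : ℝ))).smul_const y
    exact hlim.eventually_mem hV₁
  refine ((absorbs_iff_eventually_nhds_zero (mem_of_mem_nhds hV₁)).mpr ?_).mono_left hV₁V
  filter_upwards [hsmall c, hsmall d] with r hrc hrd x hx
  change r • x ∈ V₁
  rcases le_total 0 r with hr | hr
  · exact hfull _ _ _ hrc hrd (smul_le_smul_of_nonneg_left hx.1 hr)
      (smul_le_smul_of_nonneg_left hx.2 hr)
  · have hr' : 0 ≤ -r := neg_nonneg.mpr hr
    have hneg : ∀ y : Y, r • y = -((-r) • y) := fun y => by rw [neg_smul, neg_neg]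
    refine hfull _ _ _ hrd hrc ?_ ?_ <;> rw [hneg, hneg] <;> refine neg_le_neg_iff.mpr ?_
    · exact smul_le_smul_of_nonneg_left hx.2 hr'
    · exact smul_le_smul_of_nonneg_left hx.1 hr'

theorem RuConvZero.tendsto_map {F Y ι : Type*} [AddCommGroup F] [Module ℝ F] [PartialOrder F]
    [PosSMulMono ℝ F] [AddCommGroup Y] [Module ℝ Y] [TopologicalSpace Y] [PartialOrder Y]
    [Preorder ι] (hIcc : ∀ c d : Y, IsVonNBounded ℝ (Icc c d)) {T : F →ₗ[ℝ] Y}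
    (hT : ∀ a b : F, ∃ c d : Y, T '' Icc a b ⊆ Icc c d) {x : ι → F} (hx : RuConvZero x) :
    Tendsto (fun i => T (x i)) atTop (𝓝 0) := by
  obtain ⟨u, -, α, -, hα⟩ := hx
  obtain ⟨c, d, hcd⟩ := hT (-u) u
  refine fun V hV => mem_map.mpr ?_
  have hsmall : ∀ᶠ n : ℕ in atTop, MapsTo ((n : ℝ)⁻¹ • ·) (Icc c d) V :=
    (tendsto_inv_atTop_nhds_zero_nat (𝕜 := ℝ)).eventually
      ((hIcc c d hV).eventually_nhds_zero (mem_of_mem_nhds hV))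
  obtain ⟨n, hnV, hn⟩ := (hsmall.and (eventually_gt_atTop 0)).exists
  filter_upwards [eventually_ge_atTop (α n)] with a ha
  obtain ⟨hlow, hup⟩ := hα n hn a ha
  have hn₀ : (n : ℝ) ≠ 0 := by positivity
  have hmem : (n : ℝ) • x a ∈ Icc (-u) u := by
    constructor
    · simpa [smul_neg, smul_inv_smul₀ hn₀] using
        smul_le_smul_of_nonneg_left hlow (Nat.cast_nonneg (α := ℝ) n)
    · simpa [smul_inv_smul₀ hn₀] using
        smul_le_smul_of_nonneg_left hup (Nat.cast_nonneg (α := ℝ) n)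
  simpa [map_smul, inv_smul_smul₀ hn₀] using hnV (hcd ⟨_, hmem, rfl⟩)

theorem orderBounded_implies_topologicallyBounded_general
    {F : Type*} [AddCommGroup F] [Module ℝ F] [PartialOrder F]
    [CovariantClass F F (· + ·) (· ≤ ·)] [PosSMulMono ℝ F]
    [UniformSpace F] [IsUniformAddGroup F] [ContinuousSMul ℝ F] [LocallyConvexSpace ℝ F]
    [FirstCountableTopology F] [CompleteSpace F]
    {Y : Type*} [AddCommGroup Y] [Module ℝ Y] [TopologicalSpace Y]
    [ContinuousSMul ℝ Y] [PartialOrder Y]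
    [CovariantClass Y Y (· + ·) (· ≤ ·)] [PosSMulMono ℝ Y]
    (hFclosed : IsClosed {x : F | 0 ≤ x})
    (hFgen : ∀ x : F, ∃ a b : F, 0 ≤ a ∧ 0 ≤ b ∧ x = a - b)
    (hYnormal : NormalConeTVS Y)
    (T : F →ₗ[ℝ] Y)
    (hob : ∀ a b : F, ∃ c d : Y, T '' Set.Icc a b ⊆ Set.Icc c d) :
    ∀ B : Set F, IsVonNBounded ℝ B → IsVonNBounded ℝ (T '' B) := by
  -- makes `F` completely metrizable, hence a Baire space
  have := IsUniformAddGroup.uniformity_countably_generated (α := F)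
  have := orderClosedTopology_of_isClosed_Ici hFclosed
  have hdec : ∀ W ∈ 𝓝 (0 : F), Ici 0 ∩ W - Ici 0 ∩ W ∈ 𝓝 0 := fun _ =>
    inter_Ici_sub_mem_nhds_of_closure fun _ => closure_inter_Ici_sub_mem_nhds hFgen
  intro B hB
  have hε : Tendsto (fun n : ℕ => ((n : ℝ) + 1)⁻¹) atTop (𝓝 0) := by
    simpa using tendsto_one_div_add_atTop_nhds_zero_nat (𝕜 := ℝ)
  refine isVonNBounded_of_smul_tendsto_zero (ε := fun n : ℕ => ((n : ℝ) + 1)⁻¹) (l := atTop)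
    (.of_forall fun n => by positivity) fun y hy => ?_
  choose x hxB hxy using hy
  refine tendsto_of_subseq_tendsto fun ns hns => ?_
  obtain ⟨φ, -, hφ⟩ := exists_strictMono_ruConvZero_comp hdec
    (hB.smul_tendsto_zero (.of_forall fun n => hxB (ns n)) (hε.comp hns))
  exact ⟨φ, by simpa [← hxy, map_smul] using hφ.tendsto_map hYnormal.isVonNBounded_Icc_s4 hob⟩

/-- every order bounded linear operator from an ordered Fréchet space with a
closed generating normal cone to an ordered TVS with a generating normal cone is
topologically bounded. -/
theorem orderBounded_implies_topologicallyBounded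
    {F : Type*} [AddCommGroup F] [Module ℝ F] [PartialOrder F]
    [CovariantClass F F (· + ·) (· ≤ ·)] [PosSMulMono ℝ F]
    [UniformSpace F] [IsUniformAddGroup F] [ContinuousSMul ℝ F] [LocallyConvexSpace ℝ F]
    [FirstCountableTopology F] [T2Space F] [CompleteSpace F]
    {Y : Type*} [AddCommGroup Y] [Module ℝ Y] [TopologicalSpace Y]
    [IsTopologicalAddGroup Y] [ContinuousSMul ℝ Y] [PartialOrder Y]
    [CovariantClass Y Y (· + ·) (· ≤ ·)] [PosSMulMono ℝ Y]
    (hFclosed : IsClosed {x : F | 0 ≤ x})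
    (hFgen : ∀ x : F, ∃ a b : F, 0 ≤ a ∧ 0 ≤ b ∧ x = a - b)
    (hFnormal : NormalConeTVS F)
    (hYgen : ∀ y : Y, ∃ a b : Y, 0 ≤ a ∧ 0 ≤ b ∧ y = a - b)
    (hYnormal : NormalConeTVS Y)
    (T : F →ₗ[ℝ] Y)
    (hob : ∀ a b : F, ∃ c d : Y, T '' Set.Icc a b ⊆ Set.Icc c d) :
    ∀ B : Set F, IsVonNBounded ℝ B → IsVonNBounded ℝ (T '' B) :=
  orderBounded_implies_topologicallyBounded_general hFclosed hFgen hYnormal T hob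
end

section
/- Let X be an ordered real Banach space whose positive cone is closed, generating, and normal, and let Y be a real normed space. Then a linear operator T : X → Y is order-to-norm bounded if and only if T is bounded (norm continuous). -/
open Filter Set Topology Bornology

universe u

/-!
Normality bounds order intervals in norm. Conversely, by Andô's theorem (Baire category, then a
correction series that converges inside the closed cone) every `x` is `a - b` with `0 ≤ a, b` and
`‖a‖, ‖b‖ ≤ C‖x‖`, so it suffices to bound `T` on the cone; an operator unbounded there is already
unbounded on a single order interval `[0, u]`.
-/

section OrderedGroup

variable {X : Type*} [NormedAddCommGroup X] [PartialOrder X] [CovariantClass X X (· + ·) (· ≤ ·)]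

lemma isOrderedAddMonoid_of_covariantClass : IsOrderedAddMonoid X where
  add_le_add_left _ _ h c := add_le_add_left h c

lemma orderClosedTopology_of_isClosed_nonneg (hclosed : IsClosed {x : X | 0 ≤ x}) :
    OrderClosedTopology X where
  isClosed_le' := by
    have hle : {p : X × X | p.1 ≤ p.2} = (fun p => p.2 - p.1) ⁻¹' {x | 0 ≤ x} := by
      ext; simp [sub_nonneg]
    exact hle ▸ hclosed.preimage (continuous_snd.sub continuous_fst)

lemma isBounded_Icc_of_norm_le_mul {C : ℝ}
    (hnormal : ∀ x y : X, 0 ≤ x → x ≤ y → ‖x‖ ≤ C * ‖y‖) (a b : X) : IsBounded (Icc a b) := by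
  refine isBounded_iff_forall_norm_le.mpr ⟨‖a‖ + C * ‖b - a‖, fun x hx => ?_⟩
  have hxa : ‖x - a‖ ≤ C * ‖b - a‖ :=
    hnormal _ _ (sub_nonneg.mpr hx.1) (sub_le_sub_right hx.2 a)
  calc ‖x‖ = ‖a + (x - a)‖ := by rw [add_sub_cancel]
    _ ≤ ‖a‖ + C * ‖b - a‖ := (norm_add_le _ _).trans (by linarith)

end OrderedGroup

section PosDecomp

variable {X : Type*} [NormedAddCommGroup X] [PartialOrder X]

variable (X) in
def posDecompSet (c : ℝ) : Set X :=
  {x | ∃ a b : X, 0 ≤ a ∧ 0 ≤ b ∧ ‖a‖ ≤ c ∧ ‖b‖ ≤ c ∧ x = a - b}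

lemma zero_mem_posDecompSet : (0 : X) ∈ posDecompSet X 0 :=
  ⟨0, 0, le_rfl, le_rfl, by simp, by simp, by simp⟩

section Smul

variable [NormedSpace ℝ X] [PosSMulMono ℝ X]

lemma smul_mem_posDecompSet {x : X} {c t : ℝ} (ht : 0 ≤ t) (hx : x ∈ posDecompSet X c) :
    t • x ∈ posDecompSet X (t * c) := by
  obtain ⟨a, b, ha, hb, hna, hnb, rfl⟩ := hx
  refine ⟨t • a, t • b, smul_nonneg ht ha, smul_nonneg ht hb, ?_, ?_, smul_sub t a b⟩
  · rw [norm_smul, Real.norm_of_nonneg ht]; exact mul_le_mul_of_nonneg_left hna ht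
  · rw [norm_smul, Real.norm_of_nonneg ht]; exact mul_le_mul_of_nonneg_left hnb ht

lemma exists_posDecompSet_approx {c r : ℝ} (hr : 0 < r)
    (hball : Metric.ball (0 : X) r ⊆ closure (posDecompSet X c)) (y : X) :
    ∃ d ∈ posDecompSet X (2 * c / r * ‖y‖), ‖y - d‖ ≤ ‖y‖ / 2 := by
  rcases eq_or_ne y 0 with rfl | hy
  · exact ⟨0, by simpa using zero_mem_posDecompSet, by simp⟩
  set t := 2 * ‖y‖ / r with ht_def
  have ht : 0 < t := by positivity
  have hyt : t⁻¹ • y ∈ Metric.ball (0 : X) r := by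
    rw [mem_ball_zero_iff, norm_smul, Real.norm_of_nonneg (inv_nonneg.mpr ht.le), ht_def]
    field_simp
    norm_num
  obtain ⟨d, hd, hdy⟩ := Metric.mem_closure_iff.mp (hball hyt) (r / 4) (by positivity)
  refine ⟨t • d, ?_, ?_⟩
  · convert smul_mem_posDecompSet ht.le hd using 2
    rw [ht_def]; ring
  · have hyd : y - t • d = t • (t⁻¹ • y - d) := by rw [smul_sub, smul_inv_smul₀ ht.ne']
    calc ‖y - t • d‖ = t * ‖t⁻¹ • y - d‖ := by rw [hyd, norm_smul, Real.norm_of_nonneg ht.le]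
      _ ≤ t * (r / 4) := by rw [← dist_eq_norm]; gcongr
      _ = ‖y‖ / 2 := by rw [ht_def]; field_simp; ring

end Smul

variable [CovariantClass X X (· + ·) (· ≤ ·)]

lemma sub_mem_posDecompSet {x y : X} {c d : ℝ} (hx : x ∈ posDecompSet X c)
    (hy : y ∈ posDecompSet X d) : x - y ∈ posDecompSet X (c + d) := by
  obtain ⟨a, b, ha, hb, hna, hnb, rfl⟩ := hx
  obtain ⟨a', b', ha', hb', hna', hnb', rfl⟩ := hy
  refine ⟨a + b', b + a', add_nonneg ha hb', add_nonneg hb ha', ?_, ?_, by abel⟩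
  · exact (norm_add_le _ _).trans (add_le_add hna hnb')
  · exact (norm_add_le _ _).trans (add_le_add hnb hna')

/-- By Baire, some `closure (posDecompSet X n)` contains a ball `ball x₀ r`, and
`y = (x₀ + y) - x₀` puts `ball 0 r` into `closure (posDecompSet X (n + n))`. -/
lemma exists_ball_subset_closure_posDecompSet [CompleteSpace X]
    (hgen : ∀ x : X, ∃ a b : X, 0 ≤ a ∧ 0 ≤ b ∧ x = a - b) :
    ∃ c ≥ 0, ∃ r > 0, Metric.ball (0 : X) r ⊆ closure (posDecompSet X c) := by
  have hcover : ⋃ n : ℕ, closure (posDecompSet X n) = univ := by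
    refine eq_univ_of_forall fun x => ?_
    obtain ⟨a, b, ha, hb, rfl⟩ := hgen x
    obtain ⟨n, hn⟩ := exists_nat_ge (max ‖a‖ ‖b‖)
    exact mem_iUnion.mpr ⟨n, subset_closure
      ⟨a, b, ha, hb, (le_max_left _ _).trans hn, (le_max_right _ _).trans hn, rfl⟩⟩
  obtain ⟨n, x₀, hx₀⟩ := nonempty_interior_of_iUnion_of_closed (fun _ => isClosed_closure) hcover
  obtain ⟨r, hr, hball⟩ := Metric.isOpen_iff.mp isOpen_interior x₀ hx₀
  refine ⟨n + n, by positivity, r, hr, fun y hy => Metric.mem_closure_iff.mpr fun ε hε => ?_⟩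
  have hx₀y : x₀ + y ∈ closure (posDecompSet X n) :=
    interior_subset (hball (by simpa using hy))
  obtain ⟨d₁, hd₁, hxd₁⟩ := Metric.mem_closure_iff.mp hx₀y (ε / 2) (half_pos hε)
  obtain ⟨d₂, hd₂, hxd₂⟩ :=
    Metric.mem_closure_iff.mp (interior_subset hx₀) (ε / 2) (half_pos hε)
  refine ⟨d₁ - d₂, sub_mem_posDecompSet hd₁ hd₂, ?_⟩
  calc dist y (d₁ - d₂) = ‖(x₀ + y - d₁) - (x₀ - d₂)‖ := by rw [dist_eq_norm]; congr 1; abel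
    _ ≤ dist (x₀ + y) d₁ + dist x₀ d₂ := by rw [dist_eq_norm, dist_eq_norm]; exact norm_sub_le _ _
    _ < ε := by linarith

/-- Correcting the error again and again, `x` is the sum of a series of approximations whose
decompositions shrink geometrically; their sums converge and stay in the closed cone. -/
lemma mem_posDecompSet_of_approx [CompleteSpace X] (hclosed : IsClosed {x : X | 0 ≤ x})
    {C : ℝ} (hC : 0 ≤ C) (happrox : ∀ y : X, ∃ d ∈ posDecompSet X (C * ‖y‖), ‖y - d‖ ≤ ‖y‖ / 2)
    (x : X) : x ∈ posDecompSet X (2 * C * ‖x‖) := by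
  have := isOrderedAddMonoid_of_covariantClass (X := X)
  have := orderClosedTopology_of_isClosed_nonneg hclosed
  choose d hd hdy using happrox
  choose a b ha hb hna hnb hab using hd
  set e : ℕ → X := fun k => (fun y => y - d y)^[k] x with he
  have he_succ : ∀ k, e (k + 1) = e k - d (e k) := fun k => Function.iterate_succ_apply' _ _ _
  have he_norm : ∀ k, ‖e k‖ ≤ (1 / 2) ^ k * ‖x‖ := by
    intro k
    induction k with
    | zero => simp [he]
    | succ k ih => rw [he_succ, pow_succ]; linarith [hdy (e k)]
  have he_lim : Tendsto e atTop (𝓝 0) := by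
    refine squeeze_zero_norm he_norm ?_
    simpa using (tendsto_pow_atTop_nhds_zero_of_lt_one (by norm_num : (0 : ℝ) ≤ 1 / 2)
      (by norm_num)).mul_const ‖x‖
  have hbound : ∀ f : X → X, (∀ y, ‖f y‖ ≤ C * ‖y‖) →
      ∀ k, ‖f (e k)‖ ≤ C * ‖x‖ * (1 / 2) ^ k := fun f hf k =>
    (hf _).trans (by nlinarith [he_norm k])
  have hgeo : HasSum (fun k : ℕ => C * ‖x‖ * (1 / 2) ^ k) (2 * C * ‖x‖) := by
    rw [show 2 * C * ‖x‖ = C * ‖x‖ * 2 by ring]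
    exact hasSum_geometric_two.mul_left (C * ‖x‖)
  have hsa : Summable fun k => a (e k) := .of_norm_bounded hgeo.summable (hbound a hna)
  have hsb : Summable fun k => b (e k) := .of_norm_bounded hgeo.summable (hbound b hnb)
  have hsum : HasSum (fun k => a (e k) - b (e k)) x := by
    have hstep : ∀ k, a (e k) - b (e k) = e k - e (k + 1) := fun k => by
      rw [← hab, he_succ, sub_sub_cancel]
    have hpartial : ∀ K, ∑ k ∈ Finset.range K, (a (e k) - b (e k)) = x - e K := fun K => by
      simp_rw [hstep]
      exact Finset.sum_range_sub' e K
    rw [(hsa.sub hsb).hasSum_iff_tendsto_nat, funext hpartial]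
    simpa using tendsto_const_nhds.sub he_lim
  refine ⟨∑' k, a (e k), ∑' k, b (e k), tsum_nonneg fun k => ha _, tsum_nonneg fun k => hb _,
    tsum_of_norm_bounded hgeo (hbound a hna), tsum_of_norm_bounded hgeo (hbound b hnb), ?_⟩
  rw [← hsa.tsum_sub hsb, hsum.tsum_eq]

/-- Andô's theorem. -/
lemma exists_forall_mem_posDecompSet_mul_norm [NormedSpace ℝ X] [PosSMulMono ℝ X]
    [CompleteSpace X] (hclosed : IsClosed {x : X | 0 ≤ x})
    (hgen : ∀ x : X, ∃ a b : X, 0 ≤ a ∧ 0 ≤ b ∧ x = a - b) :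
    ∃ C, ∀ x : X, x ∈ posDecompSet X (C * ‖x‖) := by
  obtain ⟨c, hc, r, hr, hball⟩ := exists_ball_subset_closure_posDecompSet hgen
  exact ⟨2 * (2 * c / r),
    mem_posDecompSet_of_approx hclosed (by positivity) (exists_posDecompSet_approx hr hball)⟩

end PosDecomp

section Operator

variable {X Y : Type*} [NormedAddCommGroup X] [NormedSpace ℝ X] [PartialOrder X]
  [NormedAddCommGroup Y] [NormedSpace ℝ Y]

namespace LinearMap

lemma norm_apply_le_of_forall_mem_posDecompSet {T : X →ₗ[ℝ] Y} {C M : ℝ}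
    (hdecomp : ∀ x : X, x ∈ posDecompSet X (C * ‖x‖)) (hM : 0 ≤ M)
    (hT : ∀ a : X, 0 ≤ a → ‖T a‖ ≤ M * ‖a‖) (x : X) : ‖T x‖ ≤ 2 * M * C * ‖x‖ := by
  obtain ⟨a, b, ha, hb, hna, hnb, hx⟩ := hdecomp x
  calc ‖T x‖ = ‖T a - T b‖ := by rw [hx, map_sub]
    _ ≤ M * ‖a‖ + M * ‖b‖ := (norm_sub_le _ _).trans (add_le_add (hT a ha) (hT b hb))
    _ ≤ M * (C * ‖x‖) + M * (C * ‖x‖) := by gcongr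
    _ = 2 * M * C * ‖x‖ := by ring

lemma exists_nonneg_norm_le_lt_norm_apply [PosSMulMono ℝ X] {T : X →ₗ[ℝ] Y}
    (hT : ∀ M ≥ 0, ∃ a : X, 0 ≤ a ∧ M * ‖a‖ < ‖T a‖) {ε R : ℝ} (hε : 0 < ε) (hR : 0 ≤ R) :
    ∃ c : X, 0 ≤ c ∧ ‖c‖ ≤ ε ∧ R < ‖T c‖ := by
  obtain ⟨a, ha, haT⟩ := hT (R / ε) (by positivity)
  have ha0 : 0 < ‖a‖ := norm_pos_iff.mpr fun h => by simp [h] at haT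
  refine ⟨(ε / ‖a‖) • a, smul_nonneg (by positivity) ha, ?_, ?_⟩
  · rw [norm_smul, Real.norm_of_nonneg (by positivity), div_mul_cancel₀ _ ha0.ne']
  · rw [map_smul, norm_smul, Real.norm_of_nonneg (by positivity)]
    calc R = ε / ‖a‖ * (R / ε * ‖a‖) := by field_simp
      _ < ε / ‖a‖ * ‖T a‖ := by gcongr

/-- If `T` were unbounded on the cone, there would be `c m ≥ 0` with `‖c m‖ ≤ 2⁻ᵐ` and
`m < ‖T (c m)‖`, all lying in the order interval `[0, ∑ c m]`. -/
lemma exists_bound_of_nonneg [CovariantClass X X (· + ·) (· ≤ ·)] [PosSMulMono ℝ X]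
    [CompleteSpace X] (hclosed : IsClosed {x : X | 0 ≤ x}) (T : X →ₗ[ℝ] Y)
    (hT : ∀ a b : X, IsBounded (T '' Icc a b)) :
    ∃ M ≥ 0, ∀ a : X, 0 ≤ a → ‖T a‖ ≤ M * ‖a‖ := by
  have := isOrderedAddMonoid_of_covariantClass (X := X)
  have := orderClosedTopology_of_isClosed_nonneg hclosed
  by_contra! hunb
  choose c hc0 hcε hcT using fun m : ℕ =>
    exists_nonneg_norm_le_lt_norm_apply hunb (ε := (1 / 2) ^ m) (R := m) (by positivity)
      (by positivity)
  have hs : Summable c := .of_norm_bounded summable_geometric_two hcε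
  obtain ⟨R, hR⟩ := isBounded_iff_forall_norm_le.mp (hT 0 (∑' m, c m))
  obtain ⟨m, hm⟩ := exists_nat_gt R
  have hcm : c m ∈ Icc 0 (∑' m, c m) := ⟨hc0 m, hs.le_tsum m fun j _ => hc0 j⟩
  linarith [hR _ (mem_image_of_mem T hcm), hcT m]

end LinearMap

end Operator

/-- a linear operator from an ordered Banach space with a closed generating
normal cone to a normed space is order-to-norm bounded iff it is bounded. -/
theorem orderToNormBounded_iff_bounded
    {X : Type*} [NormedAddCommGroup X] [NormedSpace ℝ X] [CompleteSpace X] [PartialOrder X]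
    [CovariantClass X X (· + ·) (· ≤ ·)] [PosSMulMono ℝ X]
    {Y : Type*} [NormedAddCommGroup Y] [NormedSpace ℝ Y]
    (hclosed : IsClosed {x : X | 0 ≤ x})
    (hgen : ∀ x : X, ∃ a b : X, 0 ≤ a ∧ 0 ≤ b ∧ x = a - b)
    (hnormal : ∃ C : ℝ, 0 < C ∧ ∀ x y : X, 0 ≤ x → x ≤ y → ‖x‖ ≤ C * ‖y‖)
    (T : X →ₗ[ℝ] Y) :
    (∀ a b : X, Bornology.IsBounded (T '' Set.Icc a b)) ↔
      (∀ s : Set X, Bornology.IsBounded s → Bornology.IsBounded (T '' s)) := by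
  constructor
  · intro hT s hs
    obtain ⟨C, hdecomp⟩ := exists_forall_mem_posDecompSet_mul_norm hclosed hgen
    obtain ⟨M, hM, hMT⟩ := T.exists_bound_of_nonneg hclosed hT
    have hbound := T.norm_apply_le_of_forall_mem_posDecompSet hdecomp hM hMT
    exact (T.mkContinuous _ hbound).lipschitz.isBounded_image hs
  · obtain ⟨C, -, hC⟩ := hnormal
    exact fun hT a b => hT _ (isBounded_Icc_of_norm_le_mul hC a b)
end

section
/- Let X be an ordered real Banach space whose positive cone is closed, generating, and normal, and let Y be a real normed space. Then every σ-w-Lebesgue linear operator T : X → Y is bounded, and in particular every σ-order-to-weak continuous linear operator T : X → Y is bounded. -/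
open Filter Set Topology Bornology

universe u

/-!
By Andô's theorem (Baire category plus successive approximation, using that the cone is closed),
every `x` splits as `a - b` with `a, b ≥ 0` and `‖a‖, ‖b‖ ≤ M ‖x‖`, so it suffices to bound `T` on
the positive cone. If `T` were unbounded there, pick `w n ≥ 0` with `‖w n‖ ≤ 2⁻ⁿ` and
`‖T (w n)‖ > n`. The tails `∑_{k ≥ n} w k` decrease to `0`, so their images tend to `0` weakly,
and hence so does `T (w n)`, being a difference of consecutive tails. By the uniform boundedness
principle `T (w n)` is then norm bounded, a contradiction. A sequence decreasing to `0` order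
converges to `0`, so the second claim follows from the first.
-/

def SigmaWLebesgue {X Y : Type*} [AddCommGroup X] [Module ℝ X] [PartialOrder X]
    [NormedAddCommGroup Y] [NormedSpace ℝ Y] (T : X →ₗ[ℝ] Y) : Prop :=
  ∀ x : ℕ → X, DecreasesToZero x → ∀ f : Y →L[ℝ] ℝ, Tendsto (fun n => f (T (x n))) atTop (𝓝 0)

theorem DecreasesToZero.orderConvZero {X : Type u} [AddCommGroup X] [PartialOrder X]
    [IsOrderedAddMonoid X] {x : ℕ → X} (hx : DecreasesToZero x) : OrderConvZero x := by
  refine ⟨ULift.{u} ℕ, inferInstance, inferInstance, inferInstance, fun b => x b.down,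
    fun _ _ h => hx.1 h, ?_, fun b => ⟨b.down, fun a ha => ⟨?_, hx.1 ha⟩⟩⟩
  · convert hx.2 using 1
    exact Equiv.ulift.surjective.range_comp x
  · exact (neg_nonpos.2 (hx.2.1 ⟨b.down, rfl⟩)).trans (hx.2.1 ⟨a, rfl⟩)

theorem orderClosedTopology_of_isClosed_nonneg_s13 {X : Type*} [AddCommGroup X] [TopologicalSpace X]
    [IsTopologicalAddGroup X] [PartialOrder X] [IsOrderedAddMonoid X]
    (hclosed : IsClosed {x : X | 0 ≤ x}) : OrderClosedTopology X :=
  ⟨by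
    convert hclosed.preimage (continuous_snd.sub continuous_fst) using 1
    ext p
    simp [sub_nonneg]⟩

theorem decreasesToZero_tsum_sub_sum_range {X : Type*} [AddCommGroup X] [TopologicalSpace X]
    [IsTopologicalAddGroup X] [PartialOrder X] [IsOrderedAddMonoid X] [OrderClosedTopology X]
    {w : ℕ → X} (hw : ∀ n, 0 ≤ w n) (hs : Summable w) :
    DecreasesToZero fun n => ∑' k, w k - ∑ i ∈ Finset.range n, w i := by
  have hanti : Antitone fun n => ∑' k, w k - ∑ i ∈ Finset.range n, w i :=
    antitone_nat_of_succ_le fun n => by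
      simpa [Finset.sum_range_succ] using sub_le_sub_left (le_add_of_nonneg_right (hw n)) _
  have hlim : Tendsto (fun n => ∑' k, w k - ∑ i ∈ Finset.range n, w i) atTop (𝓝 0) := by
    simpa using hs.hasSum.tendsto_sum_nat.const_sub (∑' k, w k)
  exact ⟨hanti, isGLB_of_tendsto_atTop hanti hlim⟩

theorem bddAbove_range_norm_of_forall_dual {𝕜 E ι : Type*} [RCLike 𝕜] [NormedAddCommGroup E]
    [NormedSpace 𝕜 E] {u : ι → E} (h : ∀ f : StrongDual 𝕜 E, BddAbove (range fun i => ‖f (u i)‖)) :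
    BddAbove (range fun i => ‖u i‖) := by
  obtain ⟨C, hC⟩ := banach_steinhaus (g := fun i => NormedSpace.inclusionInDoubleDualLi 𝕜 (u i))
    fun f => (h f).imp fun C hC i => hC ⟨i, rfl⟩
  exact ⟨C, by rintro _ ⟨i, rfl⟩; exact (LinearIsometry.norm_map _ (u i)).symm.trans_le (hC i)⟩

section OrderedNormedSpace

variable {X : Type*} [NormedAddCommGroup X] [PartialOrder X]

variable (X) in
def nonnegDiffs (R : ℝ) : Set X :=
  {x | ∃ a b : X, 0 ≤ a ∧ 0 ≤ b ∧ ‖a‖ ≤ R ∧ ‖b‖ ≤ R ∧ x = a - b}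

theorem exists_mem_nonnegDiffs_nat (hgen : ∀ x : X, ∃ a b : X, 0 ≤ a ∧ 0 ≤ b ∧ x = a - b)
    (x : X) : ∃ n : ℕ, x ∈ nonnegDiffs X n := by
  obtain ⟨a, b, ha, hb, rfl⟩ := hgen x
  exact ⟨⌈max ‖a‖ ‖b‖⌉₊, a, b, ha, hb, (le_max_left _ _).trans (Nat.le_ceil _),
    (le_max_right _ _).trans (Nat.le_ceil _), rfl⟩

theorem sub_mem_nonnegDiffs [IsOrderedAddMonoid X] {R : ℝ} {x y : X} (hx : x ∈ nonnegDiffs X R)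
    (hy : y ∈ nonnegDiffs X R) : x - y ∈ nonnegDiffs X (2 * R) := by
  obtain ⟨a, b, ha, hb, hna, hnb, rfl⟩ := hx
  obtain ⟨c, d, hc, hd, hnc, hnd, rfl⟩ := hy
  refine ⟨a + d, b + c, add_nonneg ha hd, add_nonneg hb hc, ?_, ?_, by abel⟩
  · linarith [norm_add_le a d]
  · linarith [norm_add_le b c]

theorem smul_mem_nonnegDiffs [NormedSpace ℝ X] [PosSMulMono ℝ X] {R t : ℝ} {x : X}
    (hx : x ∈ nonnegDiffs X R) (ht : 0 ≤ t) : t • x ∈ nonnegDiffs X (t * R) := by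
  obtain ⟨a, b, ha, hb, hna, hnb, rfl⟩ := hx
  refine ⟨t • a, t • b, smul_nonneg ht ha, smul_nonneg ht hb, ?_, ?_, smul_sub t a b⟩
  · rw [norm_smul, Real.norm_of_nonneg ht]; gcongr
  · rw [norm_smul, Real.norm_of_nonneg ht]; gcongr

theorem exists_ball_subset_closure_nonnegDiffs [IsOrderedAddMonoid X] [CompleteSpace X]
    (hgen : ∀ x : X, ∃ a b : X, 0 ≤ a ∧ 0 ≤ b ∧ x = a - b) :
    ∃ R r : ℝ, 0 ≤ R ∧ 0 < r ∧ Metric.ball (0 : X) r ⊆ closure (nonnegDiffs X R) := by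
  have hcover : ⋃ n : ℕ, closure (nonnegDiffs X n) = univ :=
    eq_univ_of_forall fun x =>
      mem_iUnion.2 ((exists_mem_nonnegDiffs_nat hgen x).imp fun _ hn => subset_closure hn)
  obtain ⟨N, x₀, hx₀⟩ := nonempty_interior_of_iUnion_of_closed (fun _ => isClosed_closure) hcover
  obtain ⟨r, hr, hball⟩ := Metric.isOpen_iff.1 isOpen_interior x₀ hx₀
  refine ⟨2 * N, r, by positivity, hr, fun y hy => ?_⟩
  have hx₀y : x₀ + y ∈ closure (nonnegDiffs X N) :=
    interior_subset (hball (by simpa [dist_eq_norm] using hy))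
  -- `y = (x₀ + y) - x₀` is a difference of two points of `closure (nonnegDiffs X N)`
  simpa using map_mem_closure₂ continuous_sub hx₀y (interior_subset hx₀)
    fun _ ha _ hb => sub_mem_nonnegDiffs ha hb

theorem exists_forall_exists_mem_nonnegDiffs_norm_sub_le [IsOrderedAddMonoid X]
    [NormedSpace ℝ X] [PosSMulMono ℝ X] [CompleteSpace X]
    (hgen : ∀ x : X, ∃ a b : X, 0 ≤ a ∧ 0 ≤ b ∧ x = a - b) :
    ∃ K : ℝ, 0 ≤ K ∧ ∀ z : X, ∃ d ∈ nonnegDiffs X (K * ‖z‖), ‖z - d‖ ≤ ‖z‖ / 2 := by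
  obtain ⟨R, r, hR, hr, hball⟩ := exists_ball_subset_closure_nonnegDiffs hgen
  refine ⟨2 * R / r, by positivity, fun z => ?_⟩
  rcases eq_or_ne z 0 with rfl | hz
  · exact ⟨0, ⟨0, 0, le_rfl, le_rfl, by simp, by simp, by simp⟩, by simp⟩
  have hzpos : 0 < ‖z‖ := norm_pos_iff.2 hz
  set t : ℝ := 2 * ‖z‖ / r with ht
  have htpos : 0 < t := by positivity
  have hscaled : t⁻¹ • z ∈ closure (nonnegDiffs X R) := hball <| by
    rw [mem_ball_zero_iff, norm_smul, Real.norm_of_nonneg (inv_nonneg.2 htpos.le), ht]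
    field_simp
    linarith
  have hzcl : z ∈ closure (nonnegDiffs X (2 * R / r * ‖z‖)) := by
    have := map_mem_closure (continuous_const_smul t) hscaled
      fun _ hy => smul_mem_nonnegDiffs hy htpos.le
    rwa [smul_inv_smul₀ htpos.ne', show t * R = 2 * R / r * ‖z‖ by rw [ht]; ring] at this
  obtain ⟨d, hd, hdist⟩ := Metric.mem_closure_iff.1 hzcl (‖z‖ / 2) (by positivity)
  exact ⟨d, hd, (dist_eq_norm z d ▸ hdist).le⟩

/-- As in the proof of the open mapping theorem: the remainders `z k` at least halve at each
step, and the pieces `d (z k) = a (z k) - b (z k)` are summed. -/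
theorem mem_nonnegDiffs_of_approx [IsOrderedAddMonoid X] [CompleteSpace X]
    [OrderClosedTopology X] {K : ℝ} (hK : 0 ≤ K)
    (happrox : ∀ z : X, ∃ d ∈ nonnegDiffs X (K * ‖z‖), ‖z - d‖ ≤ ‖z‖ / 2) (x : X) :
    x ∈ nonnegDiffs X (2 * K * ‖x‖) := by
  choose d hd hdz using happrox
  choose a b ha hb hna hnb hab using hd
  set z : ℕ → X := fun k => (fun y => y - d y)^[k] x
  have hz_succ (k : ℕ) : z (k + 1) = z k - d (z k) := Function.iterate_succ_apply' _ k x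
  have hz (k : ℕ) : ‖z k‖ ≤ (1 / 2) ^ k * ‖x‖ := by
    induction k with
    | zero => simp [z]
    | succ k ih => rw [hz_succ, pow_succ]; linarith [hdz (z k)]
  have hgeom : HasSum (fun k => K * ‖x‖ * (1 / 2) ^ k) (2 * K * ‖x‖) := by
    rw [show 2 * K * ‖x‖ = K * ‖x‖ * 2 by ring]
    exact hasSum_geometric_two.mul_left (K * ‖x‖)
  have hbound {c : X → X} (hc : ∀ y, ‖c y‖ ≤ K * ‖y‖) (k : ℕ) :
      ‖c (z k)‖ ≤ K * ‖x‖ * (1 / 2) ^ k :=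
    (hc _).trans (by nlinarith [hz k])
  have hsa := Summable.of_norm_bounded hgeom.summable (hbound hna)
  have hsb := Summable.of_norm_bounded hgeom.summable (hbound hnb)
  have hsum : HasSum (fun k => d (z k)) (∑' k, a (z k) - ∑' k, b (z k)) := by
    simpa only [← hab] using hsa.hasSum.sub hsb.hasSum
  have hpartial : Tendsto (fun n => ∑ k ∈ Finset.range n, d (z k)) atTop (𝓝 x) := by
    have hz0 : Tendsto z atTop (𝓝 0) := squeeze_zero_norm hz <| by
      simpa using (tendsto_pow_atTop_nhds_zero_of_lt_one (by norm_num : (0 : ℝ) ≤ 1 / 2)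
        (by norm_num)).mul_const ‖x‖
    have htele (n : ℕ) : ∑ k ∈ Finset.range n, d (z k) = x - z n := by
      simp_rw [show ∀ k, d (z k) = z k - z (k + 1) by intro k; rw [hz_succ]; abel]
      exact Finset.sum_range_sub' z n
    simpa [htele] using tendsto_const_nhds.sub hz0
  exact ⟨∑' k, a (z k), ∑' k, b (z k), tsum_nonneg fun _ => ha _, tsum_nonneg fun _ => hb _,
    tsum_of_norm_bounded hgeom (hbound hna), tsum_of_norm_bounded hgeom (hbound hnb),
    tendsto_nhds_unique hpartial hsum.tendsto_sum_nat⟩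

/-- Andô's theorem. -/
theorem exists_forall_mem_nonnegDiffs [IsOrderedAddMonoid X] [NormedSpace ℝ X] [PosSMulMono ℝ X]
    [CompleteSpace X] [OrderClosedTopology X]
    (hgen : ∀ x : X, ∃ a b : X, 0 ≤ a ∧ 0 ≤ b ∧ x = a - b) :
    ∃ M : ℝ, ∀ x : X, x ∈ nonnegDiffs X (M * ‖x‖) := by
  obtain ⟨K, hK, happrox⟩ := exists_forall_exists_mem_nonnegDiffs_norm_sub_le hgen
  exact ⟨2 * K, mem_nonnegDiffs_of_approx hK happrox⟩

variable [NormedSpace ℝ X] {Y : Type*} [NormedAddCommGroup Y] [NormedSpace ℝ Y] {T : X →ₗ[ℝ] Y}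

theorem LinearMap.exists_bound_of_bound_nonneg [IsOrderedAddMonoid X] [PosSMulMono ℝ X]
    [CompleteSpace X] [OrderClosedTopology X]
    (hgen : ∀ x : X, ∃ a b : X, 0 ≤ a ∧ 0 ≤ b ∧ x = a - b) {C : ℝ}
    (hC : ∀ w, 0 ≤ w → ‖T w‖ ≤ C * ‖w‖) : ∃ C' : ℝ, ∀ x, ‖T x‖ ≤ C' * ‖x‖ := by
  obtain ⟨M, hM⟩ := exists_forall_mem_nonnegDiffs hgen
  refine ⟨2 * |C| * M, fun x => ?_⟩
  obtain ⟨a, b, ha, hb, hna, hnb, hx⟩ := hM x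
  have hTa : ‖T a‖ ≤ |C| * (M * ‖x‖) :=
    (hC a ha).trans (mul_le_mul (le_abs_self C) hna (norm_nonneg a) (abs_nonneg C))
  have hTb : ‖T b‖ ≤ |C| * (M * ‖x‖) :=
    (hC b hb).trans (mul_le_mul (le_abs_self C) hnb (norm_nonneg b) (abs_nonneg C))
  calc ‖T x‖ = ‖T a - T b‖ := by rw [hx, map_sub]
    _ ≤ ‖T a‖ + ‖T b‖ := norm_sub_le _ _
    _ ≤ 2 * |C| * M * ‖x‖ := by linarith

theorem LinearMap.exists_nonneg_norm_le_lt_norm_apply_s13 [PosSMulMono ℝ X]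
    (hT : ∀ C : ℝ, ∃ w : X, 0 ≤ w ∧ C * ‖w‖ < ‖T w‖) {ε : ℝ} (hε : 0 < ε) (M : ℝ) :
    ∃ w : X, 0 ≤ w ∧ ‖w‖ ≤ ε ∧ M < ‖T w‖ := by
  obtain ⟨w, hw, hTw⟩ := hT (M / ε)
  have hwpos : 0 < ‖w‖ := norm_pos_iff.2 fun h => by simp [h] at hTw
  refine ⟨(ε / ‖w‖) • w, smul_nonneg (by positivity) hw, ?_, ?_⟩
  · rw [norm_smul, Real.norm_of_nonneg (by positivity), div_mul_cancel₀ _ hwpos.ne']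
  · rw [map_smul, norm_smul, Real.norm_of_nonneg (by positivity)]
    calc M = ε / ‖w‖ * (M / ε * ‖w‖) := by field_simp
      _ < ε / ‖w‖ * ‖T w‖ := by gcongr

theorem SigmaWLebesgue.tendsto_of_summable [IsOrderedAddMonoid X] [OrderClosedTopology X]
    (H : SigmaWLebesgue T)
    {w : ℕ → X} (hw : ∀ n, 0 ≤ w n) (hs : Summable w) (f : Y →L[ℝ] ℝ) :
    Tendsto (fun n => f (T (w n))) atTop (𝓝 0) := by
  have htail := H _ (decreasesToZero_tsum_sub_sum_range hw hs) f
  simpa [Finset.sum_range_succ] using htail.sub (htail.comp (tendsto_add_atTop_nat 1))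

theorem SigmaWLebesgue.exists_bound_nonneg [IsOrderedAddMonoid X] [PosSMulMono ℝ X]
    [CompleteSpace X] [OrderClosedTopology X]
    (H : SigmaWLebesgue T) : ∃ C : ℝ, ∀ w, 0 ≤ w → ‖T w‖ ≤ C * ‖w‖ := by
  by_contra! hT
  choose w hw hnw hTw using fun n : ℕ =>
    T.exists_nonneg_norm_le_lt_norm_apply_s13 hT (pow_pos (by norm_num : (0 : ℝ) < 1 / 2) n) n
  have hs : Summable w := Summable.of_norm_bounded summable_geometric_two hnw
  obtain ⟨C, hC⟩ := bddAbove_range_norm_of_forall_dual (𝕜 := ℝ) (u := fun n => T (w n))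
    fun f => (H.tendsto_of_summable hw hs f).norm.bddAbove_range
  obtain ⟨n, hn⟩ := exists_nat_gt C
  exact (hn.trans (hTw n)).not_ge (hC ⟨n, rfl⟩)

end OrderedNormedSpace

theorem sigmaWLebesgue_implies_bounded_general
    {X : Type*} [NormedAddCommGroup X] [NormedSpace ℝ X] [CompleteSpace X] [PartialOrder X]
    [CovariantClass X X (· + ·) (· ≤ ·)] [PosSMulMono ℝ X]
    {Y : Type*} [NormedAddCommGroup Y] [NormedSpace ℝ Y]
    (hclosed : IsClosed {x : X | 0 ≤ x})
    (hgen : ∀ x : X, ∃ a b : X, 0 ≤ a ∧ 0 ≤ b ∧ x = a - b)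
    (T : X →ₗ[ℝ] Y) :
    ((∀ x : ℕ → X, DecreasesToZero x →
        ∀ f : Y →L[ℝ] ℝ, Tendsto (fun n => f (T (x n))) atTop (𝓝 0)) →
      ∀ s : Set X, Bornology.IsBounded s → Bornology.IsBounded (T '' s)) ∧
    ((∀ x : ℕ → X, OrderConvZero x →
        ∀ f : Y →L[ℝ] ℝ, Tendsto (fun n => f (T (x n))) atTop (𝓝 0)) →
      ∀ s : Set X, Bornology.IsBounded s → Bornology.IsBounded (T '' s)) := by
  have : IsOrderedAddMonoid X := { add_le_add_left := fun _ _ h c => add_le_add_left h c }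
  have := orderClosedTopology_of_isClosed_nonneg_s13 hclosed
  have hbounded (H : SigmaWLebesgue T) (s : Set X) (hs : IsBounded s) : IsBounded (T '' s) := by
    obtain ⟨C₀, hC₀⟩ := H.exists_bound_nonneg
    obtain ⟨C, hC⟩ := T.exists_bound_of_bound_nonneg hgen hC₀
    exact (T.mkContinuous C hC).lipschitz.isBounded_image hs
  exact ⟨hbounded, fun H => hbounded fun x hx => H x hx.orderConvZero⟩

/-- every σ-w-Lebesgue linear operator from an ordered Banach space with a
closed generating normal cone to a normed space is bounded; in particular, so is every
σ-order-to-weak continuous linear operator. -/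
theorem sigmaWLebesgue_implies_bounded
    {X : Type*} [NormedAddCommGroup X] [NormedSpace ℝ X] [CompleteSpace X] [PartialOrder X]
    [CovariantClass X X (· + ·) (· ≤ ·)] [PosSMulMono ℝ X]
    {Y : Type*} [NormedAddCommGroup Y] [NormedSpace ℝ Y]
    (hclosed : IsClosed {x : X | 0 ≤ x})
    (hgen : ∀ x : X, ∃ a b : X, 0 ≤ a ∧ 0 ≤ b ∧ x = a - b)
    (hnormal : ∃ C : ℝ, 0 < C ∧ ∀ x y : X, 0 ≤ x → x ≤ y → ‖x‖ ≤ C * ‖y‖)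
    (T : X →ₗ[ℝ] Y) :
    ((∀ x : ℕ → X, DecreasesToZero x →
        ∀ f : Y →L[ℝ] ℝ, Tendsto (fun n => f (T (x n))) atTop (𝓝 0)) →
      ∀ s : Set X, Bornology.IsBounded s → Bornology.IsBounded (T '' s)) ∧
    ((∀ x : ℕ → X, OrderConvZero x →
        ∀ f : Y →L[ℝ] ℝ, Tendsto (fun n => f (T (x n))) atTop (𝓝 0)) →
      ∀ s : Set X, Bornology.IsBounded s → Bornology.IsBounded (T '' s)) :=
  sigmaWLebesgue_implies_bounded_general hclosed hgen T
end
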